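/- arXiv:2507.06875 — 10 statements merged into one kernel-verified Lean document; each statement's English description precedes it below -/
import Mathlib

section
/- Let ι be a countable index set and F = {f_i(x) = a_i x + b_i : i ∈ ι} a set of real affine functions with a_i ≥ 1 and b_i ≥ 0. Let σ > 0 be such that α = ∑_{i ∈ ι} 1/a_i^σ < 1 (the sum converging). Let S be a discrete subset of the positive reals such that ∑_{s ∈ S, s ≤ x} s^{-σ} is finite for each x. Then for every x ≥ 1, the number of pairs (w, s), where w is a finite word over ι, s ∈ S, and f_w(s) ≤ x, is at most (1/(1-α)) · (∑_{s ∈ S, 0 < s ≤ x} s^{-σ}) · x^σ. -/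
/-!
Give the pair `(w, s)` the weight `(a_w s)^(-σ)`, where `a_w = ∏ a_i` over the letters of `w`.
Since `f_w(s) ≥ a_w s`, every pair counted has weight at least `x^(-σ)`, and it has `s ≤ x`.
The total weight over all words and all `s ∈ S ∩ [0, x]` factors as
`(∑_w a_w^(-σ)) · ∑ s^(-σ)`, and the word sum is the geometric series `∑_n α^n = 1/(1-α)`.
The sums are taken in `ℝ≥0∞`, where no summability has to be checked.
-/

open scoped ENNReal

namespace ENNReal

variable {ι β : Type*}

theorem tsum_fin_pi_prod (c : ι → ℝ≥0∞) (n : ℕ) :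
    ∑' v : Fin n → ι, ∏ j, c (v j) = (∑' i, c i) ^ n := by
  induction n with
  | zero => simp
  | succ n ih =>
    rw [← (Fin.consEquiv fun _ => ι).tsum_eq, ENNReal.tsum_prod', pow_succ', ← ih,
      ← ENNReal.tsum_mul_right]
    refine tsum_congr fun i => ?_
    rw [← ENNReal.tsum_mul_left]
    refine tsum_congr fun v => ?_
    simp [Fin.prod_univ_succ, Fin.consEquiv]

theorem tsum_list_prod_map (c : ι → ℝ≥0∞) :
    ∑' w : List ι, (w.map c).prod = (1 - ∑' i, c i)⁻¹ :=
  calc ∑' w : List ι, (w.map c).prod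
      = ∑' p : Σ n, Fin n → ι, ((List.ofFn p.2).map c).prod :=
        (List.equivSigmaTuple.symm.tsum_eq _).symm
    _ = ∑' n : ℕ, ∑' v : Fin n → ι, ∏ j, c (v j) := by
        simp [ENNReal.tsum_sigma', List.map_ofFn, List.prod_ofFn]
    _ = (1 - ∑' i, c i)⁻¹ := by simp_rw [tsum_fin_pi_prod, ENNReal.tsum_geometric]

theorem tsum_list_prod_map_mul_indicator (c : ι → ℝ≥0∞) (A : Set β) (g : β → ℝ≥0∞) :
    ∑' p : List ι × β, (p.1.map c).prod * A.indicator g p.2 =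
      (1 - ∑' i, c i)⁻¹ * ∑' s : A, g s := by
  rw [ENNReal.tsum_prod', tsum_subtype, ← tsum_list_prod_map, ← ENNReal.tsum_mul_right]
  simp_rw [ENNReal.tsum_mul_left]

theorem ofReal_list_prod_map (w : List ι) {q : ι → ℝ} (hq : ∀ i, 0 ≤ q i) :
    ENNReal.ofReal (w.map q).prod = (w.map fun i => ENNReal.ofReal (q i)).prod := by
  induction w with
  | nil => simp
  | cons i w ih =>
    rw [List.map_cons, List.prod_cons, ENNReal.ofReal_mul (hq i), ih, List.map_cons, List.prod_cons]

theorem inv_one_sub_tsum_ofReal {q : ι → ℝ} (hq : ∀ i, 0 ≤ q i) (hsum : Summable q)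
    (hlt : ∑' i, q i < 1) :
    (1 - ∑' i, ENNReal.ofReal (q i))⁻¹ = ENNReal.ofReal (1 - ∑' i, q i)⁻¹ := by
  rw [← ENNReal.ofReal_tsum_of_nonneg hq hsum, ← ENNReal.ofReal_one,
    ← ENNReal.ofReal_sub _ (tsum_nonneg hq), ENNReal.ofReal_inv_of_pos (by linarith)]

end ENNReal

theorem Set.finite_and_ncard_mul_le_of_tsum_le {α : Type*} {T : Set α} (f : α → ℝ≥0∞)
    {ε M : ℝ} (hε : 0 < ε) (hM : 0 ≤ M) (hf : ∀ t ∈ T, ENNReal.ofReal ε ≤ f t)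
    (hsum : ∑' t, f t ≤ ENNReal.ofReal M) :
    T.Finite ∧ T.ncard * ε ≤ M := by
  have hbound : T.encard * ENNReal.ofReal ε ≤ ENNReal.ofReal M :=
    calc T.encard * ENNReal.ofReal ε = ∑' _ : T, ENNReal.ofReal ε :=
          (ENNReal.tsum_set_const T _).symm
      _ ≤ ∑' t : T, f t := ENNReal.tsum_le_tsum fun t => hf t t.2
      _ ≤ ∑' t, f t := ENNReal.tsum_comp_le_tsum_of_injective Subtype.val_injective f
      _ ≤ ENNReal.ofReal M := hsum
  have hfin : T.Finite := by
    refine Set.encard_ne_top_iff.mp fun htop => ?_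
    rw [htop, ENat.toENNReal_top, ENNReal.top_mul (by simpa using hε)] at hbound
    exact ENNReal.ofReal_ne_top (top_le_iff.mp hbound)
  refine ⟨hfin, ?_⟩
  rw [← hfin.cast_ncard_eq, ENat.toENNReal_coe, ← ENNReal.ofReal_natCast,
    ← ENNReal.ofReal_mul (Nat.cast_nonneg _)] at hbound
  exact (ENNReal.ofReal_le_ofReal_iff hM).mp hbound

section AffineWords

variable {ι : Type*} {a b : ι → ℝ}

theorem le_foldr_affine (ha : ∀ i, 1 ≤ a i) (hb : ∀ i, 0 ≤ b i) (w : List ι) {s : ℝ}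
    (hs : 0 ≤ s) : s ≤ w.foldr (fun i y => a i * y + b i) s := by
  induction w with
  | nil => rfl
  | cons i w ih =>
    rw [List.foldr_cons]
    nlinarith [ha i, hb i]

theorem prod_map_mul_le_foldr_affine (ha : ∀ i, 0 ≤ a i) (hb : ∀ i, 0 ≤ b i) (w : List ι)
    (s : ℝ) : (w.map a).prod * s ≤ w.foldr (fun i y => a i * y + b i) s := by
  induction w with
  | nil => simp
  | cons i w ih =>
    rw [List.map_cons, List.prod_cons, List.foldr_cons, mul_assoc]
    nlinarith [mul_le_mul_of_nonneg_left ih (ha i), hb i]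

theorem rpow_neg_le_prod_mul_rpow_neg_of_foldr_le (ha : ∀ i, 0 < a i) (hb : ∀ i, 0 ≤ b i)
    {σ : ℝ} (hσ : 0 ≤ σ) (w : List ι) {s x : ℝ} (hs : 0 < s)
    (hx : w.foldr (fun i y => a i * y + b i) s ≤ x) :
    x ^ (-σ) ≤ (w.map fun i => 1 / a i ^ σ).prod * s ^ (-σ) := by
  have hprod : 0 < (w.map a).prod := List.prod_pos fun y hy => by
    obtain ⟨i, -, rfl⟩ := List.mem_map.mp hy; exact ha i
  calc x ^ (-σ) ≤ ((w.map a).prod * s) ^ (-σ) :=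
        Real.rpow_le_rpow_of_nonpos (mul_pos hprod hs)
          ((prod_map_mul_le_foldr_affine (fun i => (ha i).le) hb w s).trans hx) (by linarith)
    _ = (w.map fun i => a i ^ (-σ)).prod * s ^ (-σ) := by
        rw [Real.mul_rpow hprod.le hs.le, Real.list_prod_map_rpow' w a (fun i _ => (ha i).le)]
    _ = (w.map fun i => 1 / a i ^ σ).prod * s ^ (-σ) := by
        simp only [Real.rpow_neg (ha _).le, one_div]

theorem ofReal_rpow_neg_le_of_foldr_le (ha : ∀ i, 0 < a i) (hb : ∀ i, 0 ≤ b i)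
    {σ : ℝ} (hσ : 0 ≤ σ) (w : List ι) {s x : ℝ} (hs : 0 < s)
    (hx : w.foldr (fun i y => a i * y + b i) s ≤ x) :
    ENNReal.ofReal (x ^ (-σ)) ≤
      (w.map fun i => ENNReal.ofReal (1 / a i ^ σ)).prod * ENNReal.ofReal (s ^ (-σ)) := by
  have hq : ∀ i, 0 ≤ 1 / a i ^ σ := fun i => by have := ha i; positivity
  have hwprod : 0 ≤ (w.map fun i => 1 / a i ^ σ).prod := List.prod_nonneg fun y hy => by
    obtain ⟨i, -, rfl⟩ := List.mem_map.mp hy; exact hq i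
  rw [← ENNReal.ofReal_list_prod_map w hq, ← ENNReal.ofReal_mul hwprod]
  exact ENNReal.ofReal_le_ofReal (rpow_neg_le_prod_mul_rpow_neg_of_foldr_le ha hb hσ w hs hx)

end AffineWords

theorem stmt_0_general {ι : Type*} (a b : ι → ℝ)
    (ha : ∀ i, 1 ≤ a i) (hb : ∀ i, 0 ≤ b i)
    (σ : ℝ) (hσ : 0 < σ)
    (hsummable : Summable fun i => 1 / (a i) ^ σ)
    (hα : (∑' i, 1 / (a i) ^ σ) < 1)
    (S : Set ℝ) (hSpos : ∀ s ∈ S, 0 < s)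
    (hSsum : ∀ x : ℝ, Summable fun s : ↥(S ∩ Set.Icc 0 x) => (s : ℝ) ^ (-σ))
    (x : ℝ) (hx : 1 ≤ x) :
    {p : List ι × ℝ | p.2 ∈ S ∧ p.1.foldr (fun i y => a i * y + b i) p.2 ≤ x}.Finite ∧
    ({p : List ι × ℝ | p.2 ∈ S ∧ p.1.foldr (fun i y => a i * y + b i) p.2 ≤ x}.ncard : ℝ) ≤
      1 / (1 - ∑' i, 1 / (a i) ^ σ) *
        (∑' s : ↥(S ∩ Set.Icc 0 x), (s : ℝ) ^ (-σ)) * x ^ σ := by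
  set T := {p : List ι × ℝ | p.2 ∈ S ∧ p.1.foldr (fun i y => a i * y + b i) p.2 ≤ x}
  set α := ∑' i, 1 / (a i) ^ σ
  set B := ∑' s : ↥(S ∩ Set.Icc 0 x), (s : ℝ) ^ (-σ)
  have hapos : ∀ i, 0 < a i := fun i => one_pos.trans_le (ha i)
  have hq : ∀ i, 0 ≤ 1 / a i ^ σ := fun i => by have := hapos i; positivity
  have hx0 : 0 < x := one_pos.trans_le hx
  have hα' : 0 ≤ (1 - α)⁻¹ := inv_nonneg.mpr (by linarith)
  have hB : 0 ≤ B := tsum_nonneg fun s => Real.rpow_nonneg s.2.2.1 _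
  set weight : List ι × ℝ → ℝ≥0∞ := fun p =>
    (p.1.map fun i => ENNReal.ofReal (1 / a i ^ σ)).prod *
      (S ∩ Set.Icc 0 x).indicator (fun s => ENNReal.ofReal (s ^ (-σ))) p.2
  have hweight : ∀ p ∈ T, ENNReal.ofReal (x ^ (-σ)) ≤ weight p := by
    rintro ⟨w, s⟩ ⟨hs, hfx⟩
    have hs0 := hSpos s hs
    have hsx : s ∈ S ∩ Set.Icc 0 x := ⟨hs, hs0.le, (le_foldr_affine ha hb w hs0.le).trans hfx⟩
    simp only [weight, Set.indicator_of_mem hsx]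
    exact ofReal_rpow_neg_le_of_foldr_le hapos hb hσ.le w hs0 hfx
  have htotal : ∑' p, weight p = ENNReal.ofReal ((1 - α)⁻¹ * B) := by
    rw [ENNReal.tsum_list_prod_map_mul_indicator, ENNReal.inv_one_sub_tsum_ofReal hq hsummable hα,
      ← ENNReal.ofReal_tsum_of_nonneg (fun s => Real.rpow_nonneg s.2.2.1 _) (hSsum x),
      ENNReal.ofReal_mul hα']
  obtain ⟨hfin, hcard⟩ := Set.finite_and_ncard_mul_le_of_tsum_le weight
    (Real.rpow_pos_of_pos hx0 _) (mul_nonneg hα' hB) hweight htotal.le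
  refine ⟨hfin, ?_⟩
  calc (T.ncard : ℝ) = T.ncard * x ^ (-σ) * x ^ σ := by
        rw [mul_assoc, ← Real.rpow_add hx0, neg_add_cancel, Real.rpow_zero, mul_one]
    _ ≤ 1 / (1 - α) * B * x ^ σ := by
        rw [one_div]; gcongr

/-- **Erdős–Lagarias upper bound.**
For a countable family of affine maps `f i = a i * x + b i` with `a i ≥ 1`, `b i ≥ 0`,
an exponent `σ > 0` with `α = ∑ 1/(a i)^σ < 1`, and a discrete set `S` of positive reals,
the number of pairs `(w, s)` of a finite word `w` and `s ∈ S` with `f_w(s) ≤ x` is at most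
`(1/(1-α)) · (∑_{s ∈ S, 0 < s ≤ x} s^{-σ}) · x^σ`. -/
theorem stmt_0 {ι : Type*} [Countable ι] (a b : ι → ℝ)
    (ha : ∀ i, 1 ≤ a i) (hb : ∀ i, 0 ≤ b i)
    (σ : ℝ) (hσ : 0 < σ)
    (hsummable : Summable fun i => 1 / (a i) ^ σ)
    (hα : (∑' i, 1 / (a i) ^ σ) < 1)
    (S : Set ℝ) (hSpos : ∀ s ∈ S, 0 < s)
    (hSdisc : ∀ c : ℝ, ¬ AccPt c (Filter.principal S))
    (hSsum : ∀ x : ℝ, Summable fun s : ↥(S ∩ Set.Icc 0 x) => (s : ℝ) ^ (-σ))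
    (x : ℝ) (hx : 1 ≤ x) :
    {p : List ι × ℝ | p.2 ∈ S ∧ p.1.foldr (fun i y => a i * y + b i) p.2 ≤ x}.Finite ∧
    ({p : List ι × ℝ | p.2 ∈ S ∧ p.1.foldr (fun i y => a i * y + b i) p.2 ≤ x}.ncard : ℝ) ≤
      1 / (1 - ∑' i, 1 / (a i) ^ σ) *
        (∑' s : ↥(S ∩ Set.Icc 0 x), (s : ℝ) ^ (-σ)) * x ^ σ :=
  stmt_0_general a b ha hb σ hσ hsummable hα S hSpos hSsum x hx
end

section
/- Let F = {f_i(x) = a_i x + b_i : i = 1,…,n} be a finite set of real affine functions with a_i > 1 and b_i ≥ 0, and let σ > 0 satisfy ∑_{i=1}^n 1/a_i^σ = 1. Set δ = min_i a_i, β = max_i b_i, γ = max_i a_i. Let S be a discrete subset of the positive reals. Then for every x ≥ 1, the number of pairs (w, s), where w is a finite word over {1,…,n}, s ∈ S, and f_w(s) ≤ x, is at least ((δ-1)^σ/γ^σ) · (∑_{s ∈ S, x(δ-1) ≥ s(δ-1)+β} 1/(s(δ-1)+β)^σ) · x^σ. -/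
open Finset in
lemma tree_mass {n : ℕ} (p : Fin n → ℝ) (hpsum : ∑ i, p i = 1) :
    ∀ (m : ℕ) (W : Finset (List (Fin n))), W.card = m → [] ∈ W →
    (∀ i w, i :: w ∈ W → w ∈ W) →
    ∑ w ∈ W, (w.map p).prod * (∑ i ∈ univ.filter (fun i => i :: w ∉ W), p i) = 1 := by
  intro m
  induction m using Nat.strong_induction_on with
  | _ m ih =>
    intro W hcard hnil hcl
    obtain ⟨w₀, hw₀W, hmax⟩ := W.exists_max_image List.length ⟨[], hnil⟩
    match w₀, hw₀W, hmax with
    | [], hw₀W, hmax =>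
      have hW : W = {[]} := by
        apply Finset.eq_singleton_iff_unique_mem.mpr
        exact ⟨hnil, fun w hw => List.length_eq_zero_iff.mp (Nat.le_zero.mp (hmax w hw))⟩
      subst hW
      simp only [Finset.sum_singleton, List.map_nil, List.prod_nil, one_mul]
      rw [Finset.filter_true_of_mem, hpsum]
      intro i _
      simp
    | (i₀ :: w₁), hw₀W, hmax =>
      set w₀ := i₀ :: w₁ with hw₀def
      have hw₁W : w₁ ∈ W := hcl _ _ hw₀W
      have hlen : ∀ w ∈ W, w.length ≤ w₁.length + 1 := fun w hw => hmax w hw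
      set W₂ := W.erase w₀ with hW₂def
      have hw₀notW₂ : w₀ ∉ W₂ := Finset.notMem_erase _ _
      have hmemW₂ : ∀ w, w ∈ W₂ ↔ w ∈ W ∧ w ≠ w₀ := by
        intro w; rw [hW₂def, Finset.mem_erase]; tauto
      have hnil₂ : [] ∈ W₂ := (hmemW₂ []).mpr ⟨hnil, by simp [hw₀def]⟩
      have hcl₂ : ∀ i w, i :: w ∈ W₂ → w ∈ W₂ := by
        intro i w hw
        have h1 : i :: w ∈ W := ((hmemW₂ _).mp hw).1
        have h2 : w ∈ W := hcl _ _ h1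
        refine (hmemW₂ w).mpr ⟨h2, fun hww => ?_⟩
        have hl := hlen _ h1
        rw [hww, hw₀def] at hl
        simp at hl
      have hcard₂ : W₂.card = m - 1 := by rw [hW₂def, Finset.card_erase_of_mem hw₀W, hcard]
      have hm1 : 1 ≤ m := by rw [← hcard]; exact Finset.card_pos.mpr ⟨[], hnil⟩
      have hIH := ih (m - 1) (by omega) W₂ hcard₂ hnil₂ hcl₂
      have hw₁ne : w₁ ≠ w₀ := by
        intro h
        rw [hw₀def] at h
        exact List.cons_ne_self i₀ w₁ h.symm
      have hw₁W₂ : w₁ ∈ W₂ := (hmemW₂ _).mpr ⟨hw₁W, hw₁ne⟩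
      -- c_W w₀ = 1
      have hcw₀ : (∑ i ∈ univ.filter (fun i => i :: w₀ ∉ W), p i) = 1 := by
        rw [Finset.filter_true_of_mem, hpsum]
        intro i _
        intro hmem
        have hl := hlen _ hmem
        rw [hw₀def] at hl
        simp at hl
      -- for w in W₂, w ≠ w₁ : filters agree
      have hfilter_eq : ∀ w ∈ W₂.erase w₁,
          (univ.filter (fun i => i :: w ∉ W)) = (univ.filter (fun i => i :: w ∉ W₂)) := by
        intro w hw
        rcases Finset.mem_erase.mp hw with ⟨hwne, hwW₂⟩
        ext i
        simp only [Finset.mem_filter, Finset.mem_univ, true_and]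
        have hne : i :: w ≠ w₀ := by
          rw [hw₀def]; intro hc; injection hc with h1 h2; exact hwne h2
        rw [hmemW₂ (i :: w)]
        tauto
      -- filter at w₁
      have hfilter_w₁ : (univ.filter (fun i => i :: w₁ ∉ W₂))
          = insert i₀ (univ.filter (fun i => i :: w₁ ∉ W)) := by
        ext i
        have hcons : i :: w₁ = w₀ ↔ i = i₀ := by rw [hw₀def]; simp
        simp only [Finset.mem_insert, Finset.mem_filter, Finset.mem_univ, true_and,
          hmemW₂, not_and, ne_eq, hcons]
        tauto
      have hi₀notin : i₀ ∉ univ.filter (fun i => i :: w₁ ∉ W) := by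
        simp only [Finset.mem_filter, Finset.mem_univ, true_and, not_not]
        rw [← hw₀def]; exact hw₀W
      have hcw₁ : (∑ i ∈ univ.filter (fun i => i :: w₁ ∉ W₂), p i)
          = p i₀ + ∑ i ∈ univ.filter (fun i => i :: w₁ ∉ W), p i := by
        rw [hfilter_w₁, Finset.sum_insert hi₀notin]
      have hPw₀ : ((w₀.map p).prod : ℝ) = p i₀ * (w₁.map p).prod := by
        rw [hw₀def]; simp
      -- assemble
      rw [← Finset.add_sum_erase _ _ hw₀W, ← hW₂def, hcw₀, mul_one, hPw₀,
        ← Finset.add_sum_erase _ _ hw₁W₂]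
      rw [← Finset.add_sum_erase _ _ hw₁W₂, hcw₁] at hIH
      have hrest : ∑ w ∈ W₂.erase w₁,
            (w.map p).prod * (∑ i ∈ univ.filter (fun i => i :: w ∉ W), p i)
          = ∑ w ∈ W₂.erase w₁,
            (w.map p).prod * (∑ i ∈ univ.filter (fun i => i :: w ∉ W₂), p i) :=
        Finset.sum_congr rfl fun w hw => by rw [hfilter_eq w hw]
      rw [hrest]
      linear_combination hIH

lemma per_point {n : ℕ} (hn : 0 < n) (a b : Fin n → ℝ) (ha : ∀ i, 1 < a i) (hb : ∀ i, 0 ≤ b i)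
    (σ : ℝ) (hσ : 0 < σ) (hsum : ∑ i, 1 / (a i) ^ σ = 1)
    (δ β γ : ℝ) (hδle : ∀ i, δ ≤ a i) (hδ1 : 1 < δ) (hβle : ∀ i, b i ≤ β) (hβ0 : 0 ≤ β)
    (hγle : ∀ i, a i ≤ γ)
    (x s : ℝ) (hs : 0 < s) (hsx : s ≤ x) :
    ∃ Ws : Finset (List (Fin n)),
      (∀ w ∈ Ws, w.foldr (fun i y => a i * y + b i) s ≤ x) ∧
      (x / (γ * (s + β / (δ - 1)))) ^ σ ≤ (Ws.card : ℝ) := by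
  classical
  set f : List (Fin n) → ℝ := fun w => w.foldr (fun i y => a i * y + b i) s with hf
  have hfnil : f [] = s := rfl
  have hfcons : ∀ i w, f (i :: w) = a i * f w + b i := fun i w => rfl
  have hfs : ∀ w, s ≤ f w := by
    intro w; induction w with
    | nil => exact le_of_eq hfnil.symm
    | cons i w ihw => rw [hfcons]; nlinarith [ha i, hb i]
  have hδ0 : (0:ℝ) < δ - 1 := by linarith
  have hγ1 : 1 < γ := lt_of_lt_of_le hδ1 ((hδle ⟨0, hn⟩).trans (hγle ⟨0, hn⟩))
  set t := s + β / (δ - 1) with ht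
  have ht0 : 0 < t := add_pos_of_pos_of_nonneg hs (div_nonneg hβ0 hδ0.le)
  have hx0 : 0 < x := lt_of_lt_of_le hs hsx
  -- growth lemma
  have hgrow : ∀ w : List (Fin n), δ ^ w.length * s ≤ f w := by
    intro w; induction w with
    | nil => simp [hfnil]
    | cons i w ihw =>
      rw [hfcons, List.length_cons, pow_succ]
      have h1 : (0:ℝ) < δ ^ w.length * s := by positivity
      have h2 := hδle i
      have h3 := hb i
      have h4 : δ * (δ ^ w.length * s) ≤ δ * f w :=
        mul_le_mul_of_nonneg_left ihw (by linarith)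
      have h5 : δ * f w ≤ a i * f w :=
        mul_le_mul_of_nonneg_right h2 (le_trans hs.le (hfs w))
      nlinarith
  -- products at least 1
  have hA1 : ∀ w : List (Fin n), 1 ≤ (w.map a).prod := by
    intro w; induction w with
    | nil => simp
    | cons i w ihw =>
      rw [List.map_cons, List.prod_cons]
      nlinarith [ha i]
  -- key inequality on b
  have hbkey : ∀ i, b i + β / (δ - 1) ≤ a i * (β / (δ - 1)) := by
    intro i
    have hq : (β / (δ - 1)) * (δ - 1) = β := div_mul_cancel₀ β (ne_of_gt hδ0)
    have hq0 : 0 ≤ β / (δ - 1) := div_nonneg hβ0 hδ0.le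
    nlinarith [hβle i, hδle i, hδ1]
  -- invariant
  have hinv : ∀ w : List (Fin n), f w + β / (δ - 1) ≤ (w.map a).prod * t := by
    intro w; induction w with
    | nil => simp [hfnil, ht]
    | cons i w ihw =>
      rw [hfcons, List.map_cons, List.prod_cons]
      have h1 : a i * f w + b i + β / (δ - 1) ≤ a i * (f w + β / (δ - 1)) := by
        rw [mul_add]; linarith [hbkey i]
      have h2 : a i * (f w + β / (δ - 1)) ≤ a i * ((w.map a).prod * t) :=
        mul_le_mul_of_nonneg_left ihw (by nlinarith [ha i])
      calc a i * f w + b i + β / (δ - 1) ≤ a i * ((w.map a).prod * t) := le_trans h1 h2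
        _ = a i * (w.map a).prod * t := by ring
  -- length bound and finiteness
  set m := ⌈x / s / (δ - 1)⌉₊ with hm
  have hlenbd : ∀ w : List (Fin n), f w ≤ x → w.length ≤ m := by
    intro w hw
    have h1 : δ ^ w.length * s ≤ x := le_trans (hgrow w) hw
    have h2 : 1 + (w.length : ℝ) * (δ - 1) ≤ δ ^ w.length := by
      have h := one_add_mul_le_pow (show (-2:ℝ) ≤ δ - 1 by linarith) w.length
      rwa [show (1:ℝ) + (δ - 1) = δ by ring] at h
    have h4 : (δ:ℝ) ^ w.length ≤ x / s := (le_div_iff₀ hs).mpr h1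
    have h3 : (w.length : ℝ) ≤ x / s / (δ - 1) := by
      rw [le_div_iff₀ hδ0]
      nlinarith
    exact Nat.cast_le.mp ((h3.trans (Nat.le_ceil _)).trans (le_of_eq rfl))
  have hWfin : {w : List (Fin n) | f w ≤ x}.Finite :=
    (List.finite_length_le (Fin n) m).subset (fun w hw => hlenbd w hw)
  set WF := hWfin.toFinset with hWF
  have hmemWF : ∀ w, w ∈ WF ↔ f w ≤ x := fun w => hWfin.mem_toFinset
  have hnilWF : [] ∈ WF := (hmemWF []).mpr (le_of_eq_of_le hfnil hsx)
  have hclWF : ∀ i w, i :: w ∈ WF → w ∈ WF := by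
    intro i w hw
    rw [hmemWF] at hw ⊢
    rw [hfcons] at hw
    nlinarith [ha i, hb i, hfs w, hs]
  have htree := tree_mass (fun i => 1 / (a i) ^ σ) hsum WF.card WF rfl hnilWF hclWF
  -- product formula
  have hP : ∀ w : List (Fin n),
      (w.map (fun i => 1 / (a i) ^ σ)).prod = 1 / ((w.map a).prod) ^ σ := by
    intro w; induction w with
    | nil => simp
    | cons i w ihw =>
      rw [List.map_cons, List.prod_cons, List.map_cons, List.prod_cons, ihw,
        Real.mul_rpow (by nlinarith [ha i]) (by nlinarith [hA1 w]), one_div_mul_one_div]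
  set Ws := WF.filter (fun w => ∃ i, ¬ (a i * f w + b i ≤ x)) with hWs
  refine ⟨Ws, ?_, ?_⟩
  · intro w hw
    exact (hmemWF w).mp (Finset.mem_filter.mp hw).1
  · -- the counting bound
    have hEqFilter : ∑ w ∈ Ws, ((w.map (fun i => 1 / (a i) ^ σ)).prod *
          (∑ i ∈ Finset.univ.filter (fun i => i :: w ∉ WF), 1 / (a i) ^ σ))
        = ∑ w ∈ WF, ((w.map (fun i => 1 / (a i) ^ σ)).prod *
          (∑ i ∈ Finset.univ.filter (fun i => i :: w ∉ WF), 1 / (a i) ^ σ)) := by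
      apply Finset.sum_filter_of_ne
      intro w hw hFne
      by_contra hcon
      push_neg at hcon
      apply hFne
      have hempty : Finset.univ.filter (fun i => i :: w ∉ WF) = ∅ := by
        apply Finset.filter_eq_empty_iff.mpr
        intro i _
        simp only [not_not]
        rw [hmemWF, hfcons]
        exact hcon i
      rw [hempty, Finset.sum_empty, mul_zero]
    have hcle : ∀ w, (∑ i ∈ Finset.univ.filter (fun i => i :: w ∉ WF), 1 / (a i) ^ σ) ≤ 1 := by
      intro w
      have h := Finset.sum_le_sum_of_subset_of_nonneg
        (Finset.filter_subset (fun i => i :: w ∉ WF) Finset.univ)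
        (fun i _ _ => one_div_nonneg.mpr (Real.rpow_nonneg (by linarith [ha i]) σ) :
          ∀ i ∈ Finset.univ,
          i ∉ Finset.filter (fun i => i :: w ∉ WF) Finset.univ → 0 ≤ 1 / (a i) ^ σ)
      rw [hsum] at h
      exact h
    have htree' : ∑ w ∈ WF, ((w.map (fun i => 1 / (a i) ^ σ)).prod *
          (∑ i ∈ Finset.univ.filter (fun i => i :: w ∉ WF), 1 / (a i) ^ σ)) = 1 := htree
    have hPnonneg : ∀ w : List (Fin n), 0 ≤ (w.map (fun i => 1 / (a i) ^ σ)).prod := by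
      intro w
      rw [hP]
      have h := hA1 w
      have h2 : (0:ℝ) < ((w.map a).prod) ^ σ := Real.rpow_pos_of_pos (by linarith) σ
      positivity
    have hle : ∑ w ∈ Ws, ((w.map (fun i => 1 / (a i) ^ σ)).prod *
          (∑ i ∈ Finset.univ.filter (fun i => i :: w ∉ WF), 1 / (a i) ^ σ))
        ≤ ∑ w ∈ Ws, (w.map (fun i => 1 / (a i) ^ σ)).prod := by
      apply Finset.sum_le_sum
      intro w hw
      calc (w.map (fun i => 1 / (a i) ^ σ)).prod *
            (∑ i ∈ Finset.univ.filter (fun i => i :: w ∉ WF), 1 / (a i) ^ σ)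
          ≤ (w.map (fun i => 1 / (a i) ^ σ)).prod * 1 :=
            mul_le_mul_of_nonneg_left (hcle w) (hPnonneg w)
        _ = (w.map (fun i => 1 / (a i) ^ σ)).prod := mul_one _
    have hstep1 : (1:ℝ) ≤ ∑ w ∈ Ws, (w.map (fun i => 1 / (a i) ^ σ)).prod := by
      have heq1 := hEqFilter.trans htree'
      linarith
    have hgt0 : (0:ℝ) < γ * t := mul_pos (by linarith) ht0
    have hbound : ∀ w ∈ Ws, (w.map (fun i => 1 / (a i) ^ σ)).prod ≤ (γ * t / x) ^ σ := by
      intro w hw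
      obtain ⟨hwWF, hex⟩ := Finset.mem_filter.mp hw
      obtain ⟨i, hi⟩ := hex
      push_neg at hi
      have hAw := hA1 w
      have hA0 : (0:ℝ) < (w.map a).prod := lt_of_lt_of_le one_pos hAw
      have h1 : x < γ * ((w.map a).prod * t) := by
        have h0 : a i * f w + b i ≤ a i * (f w + β / (δ - 1)) := by
          rw [mul_add]; linarith [hbkey i, div_nonneg hβ0 hδ0.le]
        have h3 : a i * (f w + β / (δ - 1)) ≤ a i * ((w.map a).prod * t) :=
          mul_le_mul_of_nonneg_left (hinv w) (by linarith [ha i])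
        have h4 : a i * ((w.map a).prod * t) ≤ γ * ((w.map a).prod * t) := by
          exact mul_le_mul_of_nonneg_right (hγle i)
            (mul_nonneg (by linarith [hA1 w]) ht0.le)
        exact lt_of_lt_of_le hi (h0.trans (h3.trans h4))
      have h3 : x / (γ * t) ≤ (w.map a).prod := by
        rw [div_le_iff₀ hgt0]
        nlinarith [h1]
      rw [hP]
      have h4 : (x / (γ * t)) ^ σ ≤ ((w.map a).prod) ^ σ :=
        Real.rpow_le_rpow (div_pos hx0 hgt0).le h3 hσ.le
      have h5 : (0:ℝ) < (x / (γ * t)) ^ σ := Real.rpow_pos_of_pos (div_pos hx0 hgt0) σ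
      calc 1 / ((w.map a).prod) ^ σ ≤ 1 / ((x / (γ * t)) ^ σ) :=
            one_div_le_one_div_of_le h5 h4
        _ = (γ * t / x) ^ σ := by
            rw [one_div, ← Real.inv_rpow (div_pos hx0 hgt0).le, inv_div]
    have hcard : ∑ w ∈ Ws, (w.map (fun i => 1 / (a i) ^ σ)).prod
        ≤ (Ws.card : ℝ) * (γ * t / x) ^ σ := by
      calc ∑ w ∈ Ws, (w.map (fun i => 1 / (a i) ^ σ)).prod
          ≤ ∑ _w ∈ Ws, (γ * t / x) ^ σ := Finset.sum_le_sum hbound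
        _ = (Ws.card : ℝ) * (γ * t / x) ^ σ := by
            rw [Finset.sum_const, nsmul_eq_mul]
    have h6 : (1:ℝ) ≤ (Ws.card : ℝ) * (γ * t / x) ^ σ := le_trans hstep1 hcard
    have h7 : (x / (γ * t)) ^ σ * (γ * t / x) ^ σ = 1 := by
      rw [← Real.mul_rpow (div_pos hx0 hgt0).le (div_pos hgt0 hx0).le]
      rw [show x / (γ * t) * (γ * t / x) = 1 by field_simp]
      exact Real.one_rpow σ
    have h8 : (0:ℝ) < (x / (γ * t)) ^ σ := Real.rpow_pos_of_pos (div_pos hx0 hgt0) σ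
    have h10 : (x / (γ * t)) ^ σ * 1 ≤ (x / (γ * t)) ^ σ * ((Ws.card : ℝ) * (γ * t / x) ^ σ) :=
      mul_le_mul_of_nonneg_left h6 h8.le
    rw [mul_one] at h10
    calc (x / (γ * t)) ^ σ
        ≤ (x / (γ * t)) ^ σ * ((Ws.card : ℝ) * (γ * t / x) ^ σ) := h10
      _ = ((x / (γ * t)) ^ σ * (γ * t / x) ^ σ) * (Ws.card : ℝ) := by ring
      _ = (Ws.card : ℝ) := by rw [h7, one_mul]

/-- **Lower bound for the orbit multiset.**
For affine maps `f i = a i * x + b i` (`a i > 1`, `b i ≥ 0`), `σ > 0` with `∑ 1/(a i)^σ = 1`,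
and a discrete set `S` of positive reals, the number of pairs `(w, s)` with `f_w(s) ≤ x`
is at least `((δ-1)^σ/γ^σ) · (∑_{s ∈ S, x(δ-1) ≥ s(δ-1)+β} 1/(s(δ-1)+β)^σ) · x^σ`,
where `δ = min a i`, `β = max b i`, `γ = max a i`. -/
theorem stmt_1 (n : ℕ) (hn : 0 < n) (a b : Fin n → ℝ)
    (ha : ∀ i, 1 < a i) (hb : ∀ i, 0 ≤ b i)
    (σ : ℝ) (hσ : 0 < σ) (hsum : ∑ i, 1 / (a i) ^ σ = 1)
    (S : Set ℝ) (hSpos : ∀ s ∈ S, 0 < s)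
    (hSdisc : ∀ c : ℝ, ¬ AccPt c (Filter.principal S))
    (x : ℝ) (hx : 1 ≤ x)
    (δ β γ : ℝ) (hδ : δ = sInf (Set.range a)) (hβ : β = sSup (Set.range b))
    (hγ : γ = sSup (Set.range a)) :
    ∃ T : Finset (List (Fin n) × ℝ),
      (∀ p ∈ T, p.2 ∈ S ∧ p.1.foldr (fun i y => a i * y + b i) p.2 ≤ x) ∧
      (δ - 1) ^ σ / γ ^ σ *
        (∑' s : {s : ℝ // s ∈ S ∧ s * (δ - 1) + β ≤ x * (δ - 1)},
          1 / ((s : ℝ) * (δ - 1) + β) ^ σ) * x ^ σ ≤ (T.card : ℝ) := by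
  classical
  have hafin : (Set.range a).Finite := Set.finite_range a
  have hbfin : (Set.range b).Finite := Set.finite_range b
  have hnemp : (Set.range a).Nonempty := ⟨a ⟨0, hn⟩, ⟨0, hn⟩, rfl⟩
  have hbnemp : (Set.range b).Nonempty := ⟨b ⟨0, hn⟩, ⟨0, hn⟩, rfl⟩
  have hδmem : δ ∈ Set.range a := hδ ▸ hnemp.csInf_mem hafin
  have hδ1 : 1 < δ := by obtain ⟨i, hi⟩ := hδmem; rw [← hi]; exact ha i
  have hδle : ∀ i, δ ≤ a i := fun i => hδ ▸ csInf_le hafin.bddBelow ⟨i, rfl⟩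
  have hγle : ∀ i, a i ≤ γ := fun i => hγ ▸ le_csSup hafin.bddAbove ⟨i, rfl⟩
  have hβle : ∀ i, b i ≤ β := fun i => hβ ▸ le_csSup hbfin.bddAbove ⟨i, rfl⟩
  have hβmem : β ∈ Set.range b := hβ ▸ hbnemp.csSup_mem hbfin
  have hβ0 : 0 ≤ β := by obtain ⟨i, hi⟩ := hβmem; rw [← hi]; exact hb i
  have hδ0 : (0:ℝ) < δ - 1 := by linarith
  have hγ1 : 1 < γ := lt_of_lt_of_le hδ1 ((hδle ⟨0, hn⟩).trans (hγle ⟨0, hn⟩))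
  have hx0 : (0:ℝ) < x := by linarith
  set E : Set ℝ := {s | s ∈ S ∧ s * (δ - 1) + β ≤ x * (δ - 1)} with hE
  have hEsub : ∀ s ∈ E, 0 < s ∧ s ≤ x := by
    intro s hs
    obtain ⟨hsS, hsle⟩ := hs
    refine ⟨hSpos s hsS, ?_⟩
    have : s * (δ - 1) ≤ x * (δ - 1) := by linarith
    exact le_of_mul_le_mul_right (by linarith) hδ0
  have hEfin : E.Finite := by
    by_contra hinf
    have hinf' : E.Infinite := hinf
    obtain ⟨c, _, hacc⟩ := hinf'.exists_accPt_of_subset_isCompact (isCompact_Icc (a := (0:ℝ)) (b := x))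
      (fun s hs => Set.mem_Icc.mpr ⟨(hEsub s hs).1.le, (hEsub s hs).2⟩)
    exact hSdisc c (hacc.mono (Filter.principal_mono.mpr (fun s hs => hs.1)))
  have hkey : ∀ s : ℝ, s ∈ hEfin.toFinset → ∃ Ws : Finset (List (Fin n)),
      (∀ w ∈ Ws, w.foldr (fun i y => a i * y + b i) s ≤ x) ∧
      (x / (γ * (s + β / (δ - 1)))) ^ σ ≤ (Ws.card : ℝ) := by
    intro s hs
    rw [Set.Finite.mem_toFinset] at hs
    exact per_point hn a b ha hb σ hσ hsum δ β γ hδle hδ1 hβle hβ0 hγle x s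
      (hEsub s hs).1 (hEsub s hs).2
  choose! Ws hWs1 hWs2 using hkey
  refine ⟨hEfin.toFinset.biUnion (fun s => (Ws s).image (fun w => (w, s))), ?_, ?_⟩
  · intro p hp
    simp only [Finset.mem_biUnion, Finset.mem_image] at hp
    obtain ⟨s, hsF, w, hwW, rfl⟩ := hp
    have hsE := hEfin.mem_toFinset.mp hsF
    exact ⟨hsE.1, hWs1 s hsF w hwW⟩
  · have hdisj : ∀ s ∈ hEfin.toFinset, ∀ t ∈ hEfin.toFinset, s ≠ t →
        Disjoint ((Ws s).image (fun w => (w, s))) ((Ws t).image (fun w => (w, t))) := by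
      intro s _ t _ hst
      rw [Finset.disjoint_left]
      rintro p hp1 hp2
      simp only [Finset.mem_image] at hp1 hp2
      obtain ⟨w, _, rfl⟩ := hp1
      obtain ⟨w', _, hpe⟩ := hp2
      exact hst (congrArg Prod.snd hpe).symm
    have hcardnat : ((hEfin.toFinset.biUnion (fun s => (Ws s).image (fun w => (w, s)))).card)
        = ∑ s ∈ hEfin.toFinset, (Ws s).card := by
      rw [Finset.card_biUnion hdisj]
      apply Finset.sum_congr rfl
      intro s _
      apply Finset.card_image_of_injective
      intro w1 w2 h
      exact (Prod.ext_iff.mp h).1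
    have hcard : (((hEfin.toFinset.biUnion (fun s => (Ws s).image (fun w => (w, s)))).card : ℝ))
        = ∑ s ∈ hEfin.toFinset, ((Ws s).card : ℝ) := by
      rw [hcardnat]
      push_cast
      rfl
    have hsetE : {s : ℝ | s ∈ S ∧ s * (δ - 1) + β ≤ x * (δ - 1)} = (hEfin.toFinset : Set ℝ) := by
      rw [Set.Finite.coe_toFinset]
    have htsum1 : (∑' s : {s : ℝ // s ∈ S ∧ s * (δ - 1) + β ≤ x * (δ - 1)},
          1 / ((s : ℝ) * (δ - 1) + β) ^ σ)
        = ∑' s : (hEfin.toFinset : Set ℝ), 1 / ((s : ℝ) * (δ - 1) + β) ^ σ :=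
      tsum_congr_set_coe (fun s : ℝ => 1 / (s * (δ - 1) + β) ^ σ) hsetE
    have htsum2 := Finset.tsum_subtype' hEfin.toFinset
      (fun s : ℝ => 1 / (s * (δ - 1) + β) ^ σ)
    have htsum : (∑' s : {s : ℝ // s ∈ S ∧ s * (δ - 1) + β ≤ x * (δ - 1)},
          1 / ((s : ℝ) * (δ - 1) + β) ^ σ)
        = ∑ s ∈ hEfin.toFinset, 1 / (s * (δ - 1) + β) ^ σ := htsum1.trans htsum2
    rw [hcard, htsum, Finset.mul_sum, Finset.sum_mul]
    apply Finset.sum_le_sum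
    intro s hsF
    have hsE := hEfin.mem_toFinset.mp hsF
    have hs0 := (hEsub s hsE).1
    have ht0 : (0:ℝ) < s + β / (δ - 1) :=
      add_pos_of_pos_of_nonneg hs0 (div_nonneg hβ0 hδ0.le)
    have heq : (δ - 1) ^ σ / γ ^ σ * (1 / (s * (δ - 1) + β) ^ σ) * x ^ σ
        = (x / (γ * (s + β / (δ - 1)))) ^ σ := by
      have h1 : s * (δ - 1) + β = (δ - 1) * (s + β / (δ - 1)) := by
        field_simp
      have h2 : ((δ - 1) * (s + β / (δ - 1))) ^ σ = (δ - 1) ^ σ * (s + β / (δ - 1)) ^ σ :=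
        Real.mul_rpow hδ0.le ht0.le
      have h3 : (x / (γ * (s + β / (δ - 1)))) ^ σ = x ^ σ / (γ * (s + β / (δ - 1))) ^ σ :=
        Real.div_rpow hx0.le (mul_nonneg (by linarith : (0:ℝ) ≤ γ) ht0.le) σ
      have h4 : (γ * (s + β / (δ - 1))) ^ σ = γ ^ σ * (s + β / (δ - 1)) ^ σ :=
        Real.mul_rpow (by linarith) ht0.le
      have hδσ : (0:ℝ) < (δ - 1) ^ σ := Real.rpow_pos_of_pos hδ0 σ
      have hγσ : (0:ℝ) < γ ^ σ := Real.rpow_pos_of_pos (by linarith) σ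
      have htσ : (0:ℝ) < (s + β / (δ - 1)) ^ σ := Real.rpow_pos_of_pos ht0 σ
      rw [h1, h2, h3, h4]
      field_simp
    rw [heq]
    exact hWs2 s hsF
end

section
/- Let a_1,…,a_n be real numbers with a_i > 1, let σ > 0 satisfy ∑_{i=1}^n 1/a_i^σ = 1, and set γ = max_i a_i. For x ≥ 1, let N(x) denote the set of finite words (i_1,…,i_r) over {1,…,n} (including the empty word) such that a_{i_1} a_{i_2} ⋯ a_{i_r} ≤ x. Then for every x ≥ 1, the cardinality of N(x) satisfies |N(x)| ≥ x^σ/γ^σ. -/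
/-- For reals `a i > 1` with `σ > 0` such that `∑ 1/(a i)^σ = 1` and `γ = max a i`,
the set `N(x)` of words `(i₁,…,i_r)` (including the empty word) with
`a_{i₁} ⋯ a_{i_r} ≤ x` satisfies `|N(x)| ≥ x^σ/γ^σ` for every `x ≥ 1`. -/
theorem stmt_4 (n : ℕ) (a : Fin n → ℝ) (ha : ∀ i, 1 < a i)
    (σ : ℝ) (hσ : 0 < σ) (hsum : ∑ i, 1 / (a i) ^ σ = 1)
    (γ : ℝ) (hγ : γ = sSup (Set.range a))
    (x : ℝ) (hx : 1 ≤ x) :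
    x ^ σ / γ ^ σ ≤ (({w : List (Fin n) | (w.map a).prod ≤ x}).ncard : ℝ) := by
  classical
  have hn : 0 < n := by
    rcases Nat.eq_zero_or_pos n with h | h
    · subst h; simp at hsum
    · exact h
  set i0 : Fin n := ⟨0, hn⟩ with hi0
  -- the minimum of the a i
  obtain ⟨j, -, hj⟩ := Finset.exists_min_image Finset.univ a ⟨i0, Finset.mem_univ i0⟩
  set m := a j with hm
  have hm1 : 1 < m := ha j
  have hm0 : 0 < m := lt_trans one_pos hm1
  have hmle : ∀ i, m ≤ a i := fun i => hj i (Finset.mem_univ i)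
  -- γ bounds
  have hbdd : BddAbove (Set.range a) := (Set.finite_range a).bddAbove
  have hγle : ∀ i, a i ≤ γ := fun i => hγ ▸ le_csSup hbdd ⟨i, rfl⟩
  have hγ1 : 1 < γ := lt_of_lt_of_le (ha i0) (hγle i0)
  have hγ0 : 0 < γ := lt_trans one_pos hγ1
  -- products are positive and at least m ^ length
  have hprod : ∀ w : List (Fin n), m ^ w.length ≤ (w.map a).prod ∧ 0 < (w.map a).prod := by
    intro w
    induction w with
    | nil => simp
    | cons i w ih =>
      have hai : 0 < a i := lt_trans one_pos (ha i)
      constructor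
      · simp only [List.map_cons, List.prod_cons, List.length_cons, pow_succ]
        calc m ^ w.length * m ≤ (w.map a).prod * a i :=
              mul_le_mul ih.1 (hmle i) hm0.le ih.2.le
          _ = a i * (w.map a).prod := mul_comm _ _
      · simp only [List.map_cons, List.prod_cons]
        exact mul_pos hai ih.2
  -- finiteness of all the sets in question
  have hfin : ∀ y : ℝ, {w : List (Fin n) | (w.map a).prod ≤ y}.Finite := by
    intro y
    apply Set.Finite.subset (List.finite_length_le (Fin n) ⌊Real.logb m y⌋₊)
    intro w hw
    simp only [Set.mem_setOf_eq] at hw ⊢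
    have hy0 : 0 < y := lt_of_lt_of_le (hprod w).2 hw
    have h1 : m ^ (w.length : ℝ) ≤ y := by
      rw [Real.rpow_natCast]
      exact le_trans (hprod w).1 hw
    have h2 : (w.length : ℝ) ≤ Real.logb m y :=
      (Real.le_logb_iff_rpow_le hm1 hy0).mpr h1
    exact Nat.le_floor h2
  -- the counting (renewal) inequality
  have key : ∀ y : ℝ,
      (∑ i, (({w : List (Fin n) | (w.map a).prod ≤ y / a i}).ncard : ℝ))
        ≤ (({w : List (Fin n) | (w.map a).prod ≤ y}).ncard : ℝ) := by
    intro y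
    set T := (hfin y).toFinset with hT
    set B : Fin n → Finset (List (Fin n)) :=
      fun i => ((hfin (y / a i)).toFinset).image (List.cons i) with hB
    have hBsub : ∀ i, B i ⊆ T := by
      intro i w hw
      simp only [hB, Finset.mem_image, Set.Finite.mem_toFinset, Set.mem_setOf_eq] at hw
      obtain ⟨v, hv, rfl⟩ := hw
      have hai : 0 < a i := lt_trans one_pos (ha i)
      simp only [hT, Set.Finite.mem_toFinset, Set.mem_setOf_eq, List.map_cons, List.prod_cons]
      calc a i * (v.map a).prod ≤ a i * (y / a i) :=
            mul_le_mul_of_nonneg_left hv hai.le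
        _ = y := by field_simp
    have hdisj : ∀ i ∈ (Finset.univ : Finset (Fin n)), ∀ j ∈ Finset.univ,
        i ≠ j → Disjoint (B i) (B j) := by
      intro i _ j _ hij
      rw [Finset.disjoint_left]
      intro w hwi hwj
      simp only [hB, Finset.mem_image] at hwi hwj
      obtain ⟨v, -, rfl⟩ := hwi
      obtain ⟨u, -, hu⟩ := hwj
      exact hij (List.head_eq_of_cons_eq hu).symm
    have hcard : ∀ i, (B i).card = ((hfin (y / a i)).toFinset).card := fun i =>
      Finset.card_image_of_injective _ (List.cons_injective)
    have h1 : ∑ i, (B i).card = (Finset.univ.biUnion B).card :=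
      (Finset.card_biUnion hdisj).symm
    have h2 : Finset.univ.biUnion B ⊆ T :=
      Finset.biUnion_subset.mpr (fun i _ => hBsub i)
    have h3 : ∑ i, (B i).card ≤ T.card := h1 ▸ Finset.card_le_card h2
    have h4 : ∑ i, ((hfin (y / a i)).toFinset).card ≤ T.card := by
      rw [← Finset.sum_congr rfl (fun i _ => (hcard i))]
      exact h3
    calc (∑ i, (({w : List (Fin n) | (w.map a).prod ≤ y / a i}).ncard : ℝ))
        = ((∑ i, ((hfin (y / a i)).toFinset).card : ℕ) : ℝ) := by
          push_cast
          refine Finset.sum_congr rfl (fun i _ => ?_)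
          rw [Set.ncard_eq_toFinset_card _ (hfin (y / a i))]
      _ ≤ (T.card : ℝ) := by exact_mod_cast h4
      _ = _ := by rw [Set.ncard_eq_toFinset_card _ (hfin y)]
  -- trivial bound for 1 ≤ y ≤ γ
  have triv : ∀ y : ℝ, 1 ≤ y →
      y ≤ γ → (y / γ) ^ σ ≤ (({w : List (Fin n) | (w.map a).prod ≤ y}).ncard : ℝ) := by
    intro y h1 h2
    have h3 : (y / γ) ^ σ ≤ 1 :=
      Real.rpow_le_one (div_nonneg (le_trans zero_le_one h1) hγ0.le)
        ((div_le_one hγ0).mpr h2) hσ.le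
    have h4 : 0 < ({w : List (Fin n) | (w.map a).prod ≤ y}).ncard := by
      rw [Set.ncard_pos (hfin y)]
      exact ⟨[], by simpa using h1⟩
    calc (y / γ) ^ σ ≤ 1 := h3
      _ ≤ _ := by exact_mod_cast h4
  -- main induction
  have main : ∀ k : ℕ, ∀ y : ℝ, 1 ≤ y → y ≤ m ^ k →
      (y / γ) ^ σ ≤ (({w : List (Fin n) | (w.map a).prod ≤ y}).ncard : ℝ) := by
    intro k
    induction k with
    | zero =>
      intro y h1 h2
      exact triv y h1 (le_trans (by simpa using h2) hγ1.le)
    | succ k ih =>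
      intro y h1 h2
      by_cases hyγ : y ≤ γ
      · exact triv y h1 hyγ
      · push_neg at hyγ
        have hy0 : 0 < y := lt_trans hγ0 hyγ
        have hstep : ∀ i, (y / a i / γ) ^ σ ≤
            (({w : List (Fin n) | (w.map a).prod ≤ y / a i}).ncard : ℝ) := by
          intro i
          have hai : 0 < a i := lt_trans one_pos (ha i)
          have h1i : 1 ≤ y / a i :=
            (one_le_div hai).mpr (le_of_lt (lt_of_le_of_lt (hγle i) hyγ))
          have h2i : y / a i ≤ m ^ k := by
            have : y / a i ≤ y / m := by gcongr; exact hmle i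
            refine le_trans this ?_
            rw [div_le_iff₀ hm0, ← pow_succ]
            exact h2
          exact ih (y / a i) h1i h2i
        calc (y / γ) ^ σ
            = ∑ i, (y / γ) ^ σ * (1 / (a i) ^ σ) := by
              rw [← Finset.mul_sum, hsum, mul_one]
          _ = ∑ i, (y / a i / γ) ^ σ := by
              refine Finset.sum_congr rfl (fun i _ => ?_)
              have hai : 0 < a i := lt_trans one_pos (ha i)
              rw [div_right_comm, Real.div_rpow (by positivity) hai.le]
              ring
          _ ≤ ∑ i, (({w : List (Fin n) | (w.map a).prod ≤ y / a i}).ncard : ℝ) :=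
              Finset.sum_le_sum (fun i _ => hstep i)
          _ ≤ _ := key y
  obtain ⟨k, hk⟩ := pow_unbounded_of_one_lt x hm1
  have := main k x hx hk.le
  rwa [Real.div_rpow (le_trans zero_le_one hx) hγ0.le] at this
end

section
/- Let F = {f_i(x) = a_i x + b_i : i = 1,…,n} be a finite set of real affine functions with a_i > 1 and b_i ≥ 0, and set δ = min_i a_i and β = max_i b_i. Fix a real s ≥ 0 with s(δ-1) + β > 0. Then for every x > 0, the number of finite words w over {1,…,n} with f_w(s) ≤ x is at least the number of finite words (i_1,…,i_r) with a_{i_1} a_{i_2} ⋯ a_{i_r} ≤ x(δ-1)/(s(δ-1)+β). -/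
/-- For affine maps `f i = a i * x + b i` (`a i > 1`, `b i ≥ 0`), `δ = min a i`,
`β = max b i`, and `s ≥ 0` with `s(δ-1)+β > 0`: for every `x > 0`, the number of words `w`
with `f_w(s) ≤ x` is at least the number of words whose associated product of slopes is
at most `x(δ-1)/(s(δ-1)+β)`. -/
theorem stmt_5 (n : ℕ) (hn : 0 < n) (a b : Fin n → ℝ)
    (ha : ∀ i, 1 < a i) (hb : ∀ i, 0 ≤ b i)
    (δ β : ℝ) (hδ : δ = sInf (Set.range a)) (hβ : β = sSup (Set.range b))
    (s : ℝ) (hs : 0 ≤ s) (hsβ : 0 < s * (δ - 1) + β)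
    (x : ℝ) (hx : 0 < x) :
    ∃ T : Finset (List (Fin n)),
      (∀ w ∈ T, w.foldr (fun i y => a i * y + b i) s ≤ x) ∧
      ({w : List (Fin n) | (w.map a).prod ≤ x * (δ - 1) / (s * (δ - 1) + β)}).ncard ≤
        T.card := by
  have i0 : Fin n := ⟨0, hn⟩
  have hne : (Set.range a).Nonempty := ⟨a i0, ⟨i0, rfl⟩⟩
  obtain ⟨i₁, hi₁⟩ := hne.csInf_mem (Set.finite_range a)
  have hδ1 : 1 < δ := by rw [hδ, ← hi₁]; exact ha i₁
  have hd : (0:ℝ) < δ - 1 := by linarith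
  have hδle : ∀ i, δ ≤ a i := fun i => hδ ▸ csInf_le (Set.finite_range a).bddBelow ⟨i, rfl⟩
  have hble : ∀ i, b i ≤ β := fun i => hβ ▸ le_csSup (Set.finite_range b).bddAbove ⟨i, rfl⟩
  have hβ0 : 0 ≤ β := le_trans (hb i0) (hble i0)
  set c : ℝ := β / (δ - 1) with hc
  have hc0 : 0 ≤ c := div_nonneg hβ0 (le_of_lt hd)
  have hcβ : c * (δ - 1) = β := div_mul_cancel₀ β (ne_of_gt hd)
  have hpow : ∀ w : List (Fin n), δ ^ w.length ≤ (w.map a).prod := by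
    intro w
    induction w with
    | nil => simp
    | cons i w ih =>
      simp only [List.map_cons, List.prod_cons, List.length_cons, pow_succ]
      have h1 : (0:ℝ) < δ ^ w.length := pow_pos (by linarith) _
      nlinarith [hδle i, ha i]
  have hQ1 : ∀ w : List (Fin n), 1 ≤ (w.map a).prod := by
    intro w
    have := hpow w
    have h1 : (1:ℝ) ≤ δ ^ w.length := one_le_pow₀ (le_of_lt hδ1)
    linarith
  have hkey : ∀ w : List (Fin n),
      w.foldr (fun i y => a i * y + b i) s
        ≤ (w.map a).prod * s + c * ((w.map a).prod - 1) := by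
    intro w
    induction w with
    | nil => simp
    | cons i w ih =>
      simp only [List.foldr_cons, List.map_cons, List.prod_cons]
      have hQ := hQ1 w
      have hai := ha i
      have hbi : b i ≤ c * (δ - 1) := hcβ ▸ hble i
      have hmul : c * δ ≤ c * a i := mul_le_mul_of_nonneg_left (hδle i) hc0
      nlinarith
  set C := x * (δ - 1) / (s * (δ - 1) + β) with hC
  obtain ⟨L, hL⟩ := pow_unbounded_of_one_lt C hδ1
  have hsub : {w : List (Fin n) | (w.map a).prod ≤ C} ⊆ {w | w.length < L} := by
    intro w hw
    have := lt_of_le_of_lt (le_trans (hpow w) hw) hL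
    exact (pow_lt_pow_iff_right₀ hδ1).mp this
  have hfin : {w : List (Fin n) | (w.map a).prod ≤ C}.Finite :=
    Set.Finite.subset (List.finite_length_lt _ L) hsub
  refine ⟨hfin.toFinset, ?_, le_of_eq (Set.ncard_eq_toFinset_card _ hfin)⟩
  intro w hw
  rw [Set.Finite.mem_toFinset] at hw
  have hwle : (w.map a).prod ≤ C := hw
  have h3 : (w.map a).prod * (s * (δ - 1) + β) ≤ x * (δ - 1) := by
    rw [hC, le_div_iff₀ hsβ] at hwle; exact hwle
  have hQ := hQ1 w
  have hcs : c * (δ - 1) = β := hcβ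
  -- foldr ≤ Q*s + c*(Q-1); show Q*s + c*(Q-1) ≤ x
  have h4 : (w.map a).prod * s + c * ((w.map a).prod - 1) ≤ x := by nlinarith
  linarith [hkey w]
end

section
/- Let F = {f_i(x) = a_i x + b_i : i = 1,…,n} be a finite set of real affine functions with a_i > 1 and b_i ≥ 0, such that F is a basis of a free semigroup (distinct finite words over {1,…,n} yield distinct compositions f_w) and ∑_{i=1}^n 1/a_i = 1. Then for every real s ≥ 0 there exist a constant c > 0 and a threshold x_0 such that for all x ≥ x_0, the cardinality of the orbit set satisfies |⟨F : s⟩ ∩ [0,x]| ≥ c · x / (log x)^{(n-1)/2}. -/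
/-!
Fix letter counts `κ : Fin n → ℕ`. All words with these counts give maps `f_w` of the same slope
`P = ∏ a i ^ κ i`, so by freeness they take pairwise distinct values at `s`, and these values lie
in `[0, K * P]` for a constant `K`. Hence the orbit meets `[0, K * P]` in at least `(∑ κ i)! / ∏ (κ i)!` points.
Taking `κ i = ⌊m / a i⌋`, the condition `∑ 1 / a i = 1` gives `∑ κ i ≈ m` and `a i * κ i ≤ m`,
and Stirling's formula then bounds the multinomial coefficient below by a constant times
`P / m ^ ((n - 1) / 2)`. Finally `P` is comparable to `θ ^ m` with `θ = ∏ a i ^ (1 / a i)`, and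
choosing `θ ^ m ≈ x` gives `m = O(log x)`.
-/

open Finset Real Equiv
open scoped Nat

section AffineWords

variable {ι : Type*} (a b : ι → ℝ)

theorem foldr_affine_eq (w : List ι) (y : ℝ) :
    w.foldr (fun i z => a i * z + b i) y
      = (w.map a).prod * y + w.foldr (fun i z => a i * z + b i) 0 := by
  induction w with
  | nil => simp
  | cons i w ih => simp only [List.foldr_cons, List.map_cons, List.prod_cons, ih]; ring

variable {a b}

theorem foldr_affine_nonneg (ha : ∀ i, 0 ≤ a i) (hb : ∀ i, 0 ≤ b i) {s : ℝ} (hs : 0 ≤ s)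
    (w : List ι) : 0 ≤ w.foldr (fun i z => a i * z + b i) s := by
  induction w with
  | nil => exact hs
  | cons i w ih => exact add_nonneg (mul_nonneg (ha i) ih) (hb i)

theorem foldr_affine_zero_le {C : ℝ} (ha : ∀ i, 0 ≤ a i) (hC : ∀ i, b i ≤ C * (a i - 1))
    (w : List ι) : w.foldr (fun i z => a i * z + b i) 0 ≤ C * ((w.map a).prod - 1) := by
  induction w with
  | nil => simp
  | cons i w ih =>
    simp only [List.foldr_cons, List.map_cons, List.prod_cons]
    nlinarith [mul_le_mul_of_nonneg_left ih (ha i), hC i]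

theorem exists_foldr_affine_le_mul_prod [Fintype ι] (ha : ∀ i, 1 < a i) (hb : ∀ i, 0 ≤ b i)
    {s : ℝ} (hs : 0 ≤ s) :
      ∃ K, 1 ≤ K ∧ ∀ w : List ι,
      w.foldr (fun i z => a i * z + b i) s ≤ K * (w.map a).prod := by
  set C := ∑ i, b i / (a i - 1)
  have hC0 : 0 ≤ C := sum_nonneg fun i _ => div_nonneg (hb i) (sub_pos.2 (ha i)).le
  have hC : ∀ i, b i ≤ C * (a i - 1) := fun i => by
    rw [← div_le_iff₀ (sub_pos.2 (ha i))]
    exact single_le_sum (f := fun i => b i / (a i - 1))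
      (fun j _ => div_nonneg (hb j) (sub_pos.2 (ha j)).le) (mem_univ i)
  refine ⟨s + C + 1, by linarith, fun w => ?_⟩
  have hprod : 0 ≤ (w.map a).prod :=
    List.prod_nonneg (by simpa using fun i _ => (zero_lt_one.trans (ha i)).le)
  have hzero := foldr_affine_zero_le (fun i => (zero_lt_one.trans (ha i)).le) hC w
  rw [foldr_affine_eq]
  nlinarith

theorem eq_of_foldr_affine_eq
    (hfree : ∀ w w' : List ι, w ≠ [] → w' ≠ [] →
      (fun y => w.foldr (fun i z => a i * z + b i) y) =
        (fun y => w'.foldr (fun i z => a i * z + b i) y) → w = w')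
    {w w' : List ι} (hw : w ≠ []) (hw' : w' ≠ []) (hprod : (w.map a).prod = (w'.map a).prod)
    {s : ℝ} (h : w.foldr (fun i z => a i * z + b i) s = w'.foldr (fun i z => a i * z + b i) s) :
    w = w' := by
  refine hfree w w' hw hw' (funext fun y => ?_)
  rw [foldr_affine_eq a b w s, foldr_affine_eq a b w' s, hprod] at h
  rw [foldr_affine_eq a b w y, foldr_affine_eq a b w' y, hprod, add_left_cancel h]

end AffineWords

theorem card_image_comp_perm_mul_prod_factorial {α ι : Type*} [Fintype α] [DecidableEq α]
    [Fintype ι] [DecidableEq ι] (f : α → ι) :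
    (univ.image fun σ : Perm α => f ∘ σ).card * ∏ i, (Fintype.card {x // f x = i})!
      = (Fintype.card α)! := by
  have hfiber : ∀ σ₀ : Perm α,
      #{σ : Perm α | f ∘ σ = f ∘ σ₀} = Fintype.card {g : Perm α // f ∘ g = f} := by
    intro σ₀
    rw [← Fintype.card_subtype]
    refine Fintype.card_congr ((Equiv.mulRight σ₀⁻¹).subtypeEquiv fun σ => ?_)
    simp only [coe_mulRight, Perm.coe_mul]
    constructor
    · intro h
      rw [← Function.comp_assoc, h, Function.comp_assoc, ← Perm.coe_mul, mul_inv_cancel,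
        Perm.coe_one, Function.comp_id]
    · intro h
      conv_rhs => rw [← h]
      ext x
      simp
  calc _ = ∑ _v ∈ univ.image fun σ : Perm α => f ∘ σ,
        Fintype.card {g : Perm α // f ∘ g = f} := by
        rw [sum_const, smul_eq_mul, DomMulAct.stabilizer_card]
    _ = ∑ v ∈ univ.image fun σ : Perm α => f ∘ σ, #{σ : Perm α | f ∘ σ = v} := by
        refine sum_congr rfl fun v hv => ?_
        obtain ⟨σ₀, -, rfl⟩ := mem_image.1 hv
        exact (hfiber σ₀).symm
    _ = _ := by
        rw [← card_eq_sum_card_image, card_univ, Fintype.card_perm]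

section PermWords

variable {n : ℕ} (κ : Fin n → ℕ)

/-- The word `0 ⋯ 0 1 ⋯ 1 ⋯` with `κ i` copies of the letter `i`, as a function of the position. -/
def sortedWord (j : Fin (∑ i, κ i)) : Fin n := (finSigmaFinEquiv.symm j).1

theorem card_sortedWord_fiber (i : Fin n) : Fintype.card {j // sortedWord κ j = i} = κ i := by
  have e : {j // sortedWord κ j = i} ≃ {p : Σ i, Fin (κ i) // p.1 = i} :=
    finSigmaFinEquiv.symm.subtypeEquiv fun j => Iff.rfl
  rw [Fintype.card_congr (e.trans (Equiv.sigmaSubtype i)), Fintype.card_fin]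

def permWords : Finset (List (Fin n)) :=
  univ.image fun σ : Perm (Fin (∑ i, κ i)) => List.ofFn (sortedWord κ ∘ σ)

theorem card_permWords : (permWords κ).card = Nat.multinomial univ κ := by
  have h := card_image_comp_perm_mul_prod_factorial (sortedWord κ)
  have himage :
      permWords κ = (univ.image fun σ : Perm _ => sortedWord κ ∘ σ).image List.ofFn := by
    rw [image_image]; rfl
  rw [himage, card_image_of_injective _ List.ofFn_injective]
  simp only [card_sortedWord_fiber, Fintype.card_fin, ← Nat.multinomial_spec univ κ] at h
  rw [mul_comm] at h
  exact Nat.eq_of_mul_eq_mul_left (prod_pos fun i _ => Nat.factorial_pos _) h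

variable {κ}

theorem length_of_mem_permWords {w : List (Fin n)} (hw : w ∈ permWords κ) :
    w.length = ∑ i, κ i := by
  obtain ⟨σ, -, rfl⟩ := mem_image.1 hw
  exact List.length_ofFn

theorem prod_map_of_mem_permWords {M : Type*} [CommMonoid M] (a : Fin n → M)
    {w : List (Fin n)} (hw : w ∈ permWords κ) : (w.map a).prod = ∏ i, a i ^ κ i := by
  obtain ⟨σ, -, rfl⟩ := mem_image.1 hw
  rw [List.map_ofFn, List.prod_ofFn]
  calc ∏ j, (a ∘ sortedWord κ ∘ σ) j = ∏ j, a (sortedWord κ j) :=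
        Equiv.prod_comp σ fun j => a (sortedWord κ j)
    _ = ∏ p : Σ i, Fin (κ i), a p.1 := Equiv.prod_comp finSigmaFinEquiv.symm (fun p => a p.1)
    _ = ∏ i, a i ^ κ i := by
      rw [← univ_sigma_univ, prod_sigma]
      simp

end PermWords

theorem sqrt_mul_pow_le_factorial_mul_exp (k : ℕ) : √k * (k : ℝ) ^ k ≤ k ! * exp k := by
  have hsqrt : √k ≤ √(2 * π * k) :=
    sqrt_le_sqrt (le_mul_of_one_le_left k.cast_nonneg (by nlinarith [pi_gt_three]))
  calc √k * (k : ℝ) ^ k = √k * (k / exp 1) ^ k * exp k := by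
        rw [div_pow, exp_one_pow]; field_simp
    _ ≤ √(2 * π * k) * (k / exp 1) ^ k * exp k := by gcongr
    _ ≤ k ! * exp k := by gcongr; exact Stirling.le_factorial_stirling k

theorem factorial_mul_exp_le {k : ℕ} (hk : k ≠ 0) : k ! * exp k ≤ exp 1 * √k * (k : ℝ) ^ k := by
  obtain ⟨j, rfl⟩ := Nat.exists_eq_succ_of_ne_zero hk
  have hseq : Stirling.stirlingSeq (j + 1) ≤ exp 1 / √2 := by
    rw [← Stirling.stirlingSeq_one]
    exact Stirling.stirlingSeq'_antitone (Nat.zero_le j)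
  have hpos : 0 < √(2 * (j + 1 : ℕ)) * (((j + 1 : ℕ) : ℝ) / exp 1) ^ (j + 1) := by positivity
  rw [Stirling.stirlingSeq, div_le_iff₀ hpos] at hseq
  calc ((j + 1)! : ℝ) * exp (j + 1 : ℕ)
      ≤ exp 1 / √2 * (√(2 * (j + 1 : ℕ)) * (((j + 1 : ℕ) : ℝ) / exp 1) ^ (j + 1))
          * exp (j + 1 : ℕ) := by
        gcongr
    _ = exp 1 * √(j + 1 : ℕ) * ((j + 1 : ℕ) : ℝ) ^ (j + 1) := by
        rw [sqrt_mul zero_le_two, div_pow, exp_one_pow]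
        field_simp

section Multinomial

variable {ι : Type*} [Fintype ι]

theorem sqrt_mul_pow_le_multinomial (κ : ι → ℕ) (hκ : ∀ i, κ i ≠ 0) :
    √(∑ i, κ i : ℕ) * ((∑ i, κ i : ℕ) : ℝ) ^ (∑ i, κ i)
      ≤ exp (Fintype.card ι) * (∏ i, √(κ i)) * (∏ i, (κ i : ℝ) ^ κ i)
        * Nat.multinomial univ κ := by
  have hfac : ((∑ i, κ i)! : ℝ) = (∏ i, ((κ i)! : ℝ)) * Nat.multinomial univ κ := by
    exact_mod_cast (Nat.multinomial_spec univ κ).symm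
  have hexp : exp (∑ i, κ i : ℕ) = ∏ i, exp (κ i) := by push_cast; exact exp_sum _ _
  calc _ ≤ ((∑ i, κ i)! : ℝ) * exp (∑ i, κ i : ℕ) := sqrt_mul_pow_le_factorial_mul_exp _
    _ = (∏ i, ((κ i)! * exp (κ i))) * Nat.multinomial univ κ := by
        rw [hfac, hexp, prod_mul_distrib]; ring
    _ ≤ (∏ i, (exp 1 * √(κ i) * (κ i : ℝ) ^ κ i)) * Nat.multinomial univ κ :=
        mul_le_mul_of_nonneg_right (prod_le_prod (fun i _ => by positivity)
          fun i _ => factorial_mul_exp_le (hκ i)) (Nat.cast_nonneg _)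
    _ = _ := by
        rw [prod_mul_distrib, prod_mul_distrib, prod_const, ← exp_nat_mul, mul_one]; rfl

theorem add_pow_le_exp_mul_pow (k : ℕ) {d : ℝ} (hd : 0 ≤ d) :
    ((k : ℝ) + d) ^ k ≤ exp d * (k : ℝ) ^ k := by
  rcases eq_or_ne k 0 with rfl | hk
  · simpa using one_le_exp hd
  have hk' : (0 : ℝ) < k := by positivity
  calc ((k : ℝ) + d) ^ k = (k * (d / k + 1)) ^ k := by
        rw [mul_add, mul_div_cancel₀ _ hk'.ne', mul_one, add_comm]
    _ ≤ (k * exp (d / k)) ^ k := by gcongr; exact add_one_le_exp _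
    _ = exp d * (k : ℝ) ^ k := by
        rw [mul_pow, ← exp_nat_mul, mul_div_cancel₀ _ hk'.ne']; ring

theorem prod_mul_pow_le_exp_mul_pow (a : ι → ℝ) (κ : ι → ℕ) (ha : ∀ i, 0 ≤ a i) {d : ℝ}
    (hd : 0 ≤ d) (h : ∀ i, a i * κ i ≤ (∑ j, κ j : ℕ) + d) :
    ∏ i, (a i * κ i) ^ κ i ≤ exp d * ((∑ i, κ i : ℕ) : ℝ) ^ (∑ i, κ i) :=
  calc ∏ i, (a i * κ i) ^ κ i ≤ ∏ i, (((∑ j, κ j : ℕ) : ℝ) + d) ^ κ i :=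
        prod_le_prod (fun i _ => pow_nonneg (mul_nonneg (ha i) (Nat.cast_nonneg _)) _)
          fun i _ => pow_le_pow_left₀ (mul_nonneg (ha i) (Nat.cast_nonneg _)) (h i) _
    _ = (((∑ j, κ j : ℕ) : ℝ) + d) ^ (∑ i, κ i) := prod_pow_eq_pow_sum _ _ _
    _ ≤ _ := add_pow_le_exp_mul_pow _ hd

theorem sqrt_mul_prod_pow_le_multinomial (a : ι → ℝ) (κ : ι → ℕ) (ha : ∀ i, 0 ≤ a i)
    (hκ : ∀ i, κ i ≠ 0) {d : ℝ} (hd : 0 ≤ d) (h : ∀ i, a i * κ i ≤ (∑ j, κ j : ℕ) + d) :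
    √(∑ i, κ i : ℕ) * ∏ i, a i ^ κ i
      ≤ exp d * exp (Fintype.card ι) * (∏ i, √(κ i)) * Nat.multinomial univ κ := by
  have hG : 0 < ∏ i, (κ i : ℝ) ^ κ i :=
    prod_pos fun i _ => pow_pos (Nat.cast_pos.2 (Nat.pos_of_ne_zero (hκ i))) _
  refine le_of_mul_le_mul_right ?_ hG
  calc √(∑ i, κ i : ℕ) * (∏ i, a i ^ κ i) * ∏ i, (κ i : ℝ) ^ κ i
      = √(∑ i, κ i : ℕ) * ∏ i, (a i * κ i) ^ κ i := by
        simp only [mul_pow, prod_mul_distrib]; ring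
    _ ≤ √(∑ i, κ i : ℕ) * (exp d * ((∑ i, κ i : ℕ) : ℝ) ^ (∑ i, κ i)) := by
        gcongr; exact prod_mul_pow_le_exp_mul_pow a κ ha hd h
    _ = exp d * (√(∑ i, κ i : ℕ) * ((∑ i, κ i : ℕ) : ℝ) ^ (∑ i, κ i)) := by ring
    _ ≤ exp d * (exp (Fintype.card ι) * (∏ i, √(κ i)) * (∏ i, (κ i : ℝ) ^ κ i)
          * Nat.multinomial univ κ) :=
        mul_le_mul_of_nonneg_left (sqrt_mul_pow_le_multinomial κ hκ) (exp_pos d).le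
    _ = _ := by ring

end Multinomial

section FloorCounts

variable {ι : Type*} [Fintype ι] {a : ι → ℝ}

theorem one_lt_prod_rpow_inv [Nonempty ι] (ha : ∀ i, 1 < a i) : 1 < ∏ i, a i ^ (a i)⁻¹ := by
  simpa using prod_lt_prod_of_nonempty (f := fun _ => (1 : ℝ)) (fun _ _ => one_pos)
    (fun i _ => one_lt_rpow (ha i) (inv_pos.2 (zero_lt_one.trans (ha i)))) univ_nonempty

theorem prod_pow_floor_div_le (ha : ∀ i, 1 ≤ a i) (m : ℕ) :
    ∏ i, a i ^ ⌊m / a i⌋₊ ≤ (∏ i, a i ^ (a i)⁻¹) ^ m := by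
  rw [← prod_pow]
  refine prod_le_prod (fun i _ => by have := ha i; positivity) fun i _ => ?_
  have ha0 : 0 < a i := zero_lt_one.trans_le (ha i)
  rw [← rpow_natCast, ← rpow_natCast, ← rpow_mul ha0.le, inv_mul_eq_div]
  exact rpow_le_rpow_of_exponent_le (ha i) (Nat.floor_le (div_nonneg m.cast_nonneg ha0.le))

theorem pow_le_prod_pow_floor_div_mul_prod (ha : ∀ i, 1 ≤ a i) (m : ℕ) :
    (∏ i, a i ^ (a i)⁻¹) ^ m ≤ (∏ i, a i ^ ⌊m / a i⌋₊) * ∏ i, a i := by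
  rw [← prod_pow, ← prod_mul_distrib]
  refine prod_le_prod (fun i _ => by have := ha i; positivity) fun i _ => ?_
  have ha0 : 0 < a i := zero_lt_one.trans_le (ha i)
  rw [← rpow_natCast, ← rpow_mul ha0.le, inv_mul_eq_div, ← pow_succ, ← rpow_natCast]
  exact rpow_le_rpow_of_exponent_le (ha i) (by push_cast; exact (Nat.lt_floor_add_one _).le)

theorem cast_le_sum_floor_div_add_card (hsum : ∑ i, 1 / a i = 1) (m : ℕ) :
    (m : ℝ) ≤ (∑ i, ⌊m / a i⌋₊ : ℕ) + Fintype.card ι := by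
  calc (m : ℝ) = ∑ i, m / a i := by
        simp_rw [div_eq_mul_one_div (m : ℝ), ← mul_sum, hsum, mul_one]
    _ ≤ ∑ i, ((⌊m / a i⌋₊ : ℝ) + 1) := sum_le_sum fun i _ => (Nat.lt_floor_add_one _).le
    _ = _ := by push_cast; rw [sum_add_distrib, sum_const, Finset.card_univ, nsmul_one]

theorem prod_pow_floor_div_le_multinomial [Nonempty ι] (ha : ∀ i, 1 ≤ a i)
    (hsum : ∑ i, 1 / a i = 1) {m : ℕ} (hm : 2 * Fintype.card ι ≤ m) (ham : ∀ i, a i ≤ m) :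
    ∏ i, a i ^ ⌊m / a i⌋₊ ≤ exp (2 * Fintype.card ι) * √2
      * (m : ℝ) ^ (((Fintype.card ι : ℝ) - 1) / 2)
      * Nat.multinomial univ (fun i => ⌊m / a i⌋₊) := by
  set κ : ι → ℕ := fun i => ⌊m / a i⌋₊
  set k := ∑ i, κ i
  set c := Fintype.card ι
  have ha0 : ∀ i, 0 < a i := fun i => zero_lt_one.trans_le (ha i)
  have hκ : ∀ i, κ i ≠ 0 := fun i =>
    (Nat.floor_pos.2 ((one_le_div (ha0 i)).2 (ham i))).ne'
  have hm0 : ∀ i, 0 ≤ (m : ℝ) / a i := fun i => div_nonneg m.cast_nonneg (ha0 i).le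
  have hmk : (m : ℝ) ≤ k + c := cast_le_sum_floor_div_add_card hsum m
  have hmc : (2 * c : ℝ) ≤ m := by exact_mod_cast hm
  have hc : (1 : ℝ) ≤ c := by exact_mod_cast Fintype.card_pos
  have hk : (0 : ℝ) < √k := sqrt_pos.2 (by linarith)
  have hmain := sqrt_mul_prod_pow_le_multinomial a κ (fun i => (ha0 i).le) hκ (d := c)
    (Nat.cast_nonneg _) fun i => ((le_div_iff₀' (ha0 i)).1 (Nat.floor_le (hm0 i))).trans hmk
  have hsqrt : ∏ i, √(κ i) ≤ √2 * √k * (m : ℝ) ^ (((c : ℝ) - 1) / 2) := by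
    calc ∏ i, √(κ i) ≤ ∏ _i : ι, √m := prod_le_prod (fun i _ => sqrt_nonneg _)
          fun i _ => sqrt_le_sqrt
            ((Nat.floor_le (hm0 i)).trans (div_le_self (by positivity) (ha i)))
      _ = √m * (m : ℝ) ^ (((c : ℝ) - 1) / 2) := by
          rw [prod_const, Finset.card_univ, sqrt_eq_rpow, ← rpow_natCast,
            ← rpow_mul (by positivity), ← rpow_add (by linarith)]
          congr 1
          ring
      _ ≤ √2 * √k * (m : ℝ) ^ (((c : ℝ) - 1) / 2) := by
          rw [← sqrt_mul zero_le_two]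
          gcongr
          linarith
  refine le_of_mul_le_mul_left ?_ hk
  calc √k * ∏ i, a i ^ κ i ≤ exp c * exp c * (∏ i, √(κ i)) * Nat.multinomial univ κ := hmain
    _ ≤ exp c * exp c * (√2 * √k * (m : ℝ) ^ (((c : ℝ) - 1) / 2)) * Nat.multinomial univ κ := by
        gcongr
    _ = √k * (exp (2 * c) * √2 * (m : ℝ) ^ (((c : ℝ) - 1) / 2) * Nat.multinomial univ κ) := by
        rw [two_mul, exp_add]; ring

end FloorCounts

theorem exists_card_ge_mul_div_log_rpow {S : Set ℝ} {θ K c₀ e : ℝ} (hθ : 1 < θ) (hK : 1 ≤ K)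
    (hc₀ : 0 < c₀) (he : 0 ≤ e) (M : ℕ)
    (h : ∀ m : ℕ, M ≤ m → ∃ T : Finset ℝ,
      ↑T ⊆ S ∩ Set.Icc 0 (K * θ ^ m) ∧ c₀ * θ ^ m / (m : ℝ) ^ e ≤ T.card) :
    ∃ c : ℝ, 0 < c ∧ ∃ x₀ : ℝ, ∀ x : ℝ, x₀ ≤ x →
      ∃ T : Finset ℝ, ↑T ⊆ S ∩ Set.Icc 0 x ∧ c * x / log x ^ e ≤ T.card := by
  have hlogθ : 0 < log θ := log_pos hθ
  have hK0 : 0 < K := zero_lt_one.trans_le hK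
  refine ⟨c₀ * log θ ^ e / (K * θ), by positivity, K * θ ^ (M + 1), fun x hx => ?_⟩
  have hy : θ ^ (M + 1) ≤ x / K := by rwa [le_div_iff₀' hK0]
  obtain ⟨m, hmx, hxm⟩ := exists_nat_pow_near (one_le_pow₀ hθ.le |>.trans hy) hθ
  have hMm : M < m := by
    have := hy.trans_lt hxm
    rw [pow_lt_pow_iff_right₀ hθ] at this
    omega
  obtain ⟨T, hTS, hTcard⟩ := h m hMm.le
  have hKx : K * θ ^ m ≤ x := by rwa [← le_div_iff₀' hK0]
  refine ⟨T, hTS.trans (Set.inter_subset_inter_right S (Set.Icc_subset_Icc_right hKx)),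
    le_trans ?_ hTcard⟩
  have hm : (0 : ℝ) < m := by exact_mod_cast (Nat.zero_le M).trans_lt hMm
  have hlog : m * log θ ≤ log x := by
    rw [← log_pow]
    exact log_le_log (by positivity) ((le_mul_of_one_le_left (by positivity) hK).trans hKx)
  have hθm : x / (K * θ) ≤ θ ^ m := by
    rw [div_le_iff₀ (by positivity)]
    have := ((div_lt_iff₀ hK0).1 hxm).le
    rw [pow_succ] at this
    linarith
  calc c₀ * log θ ^ e / (K * θ) * x / log x ^ e
      = c₀ * (x / (K * θ)) / (log x ^ e / log θ ^ e) := by field_simp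
    _ ≤ c₀ * θ ^ m / (m : ℝ) ^ e := by
        gcongr
        rw [le_div_iff₀ (by positivity), ← mul_rpow (by positivity) hlogθ.le]
        exact rpow_le_rpow (by positivity) hlog he

section Orbit

variable {n : ℕ} {a b : Fin n → ℝ}

def affineOrbit (a b : Fin n → ℝ) (s : ℝ) : Set ℝ :=
  {y | ∃ w : List (Fin n), y = w.foldr (fun i z => a i * z + b i) s}

theorem exists_orbit_finset_card_eq_multinomial (ha : ∀ i, 0 ≤ a i) (hb : ∀ i, 0 ≤ b i)
    (hfree : ∀ w w' : List (Fin n), w ≠ [] → w' ≠ [] →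
      (fun y => w.foldr (fun i z => a i * z + b i) y) =
        (fun y => w'.foldr (fun i z => a i * z + b i) y) → w = w')
    {s K : ℝ} (hs : 0 ≤ s)
    (hK : ∀ w : List (Fin n), w.foldr (fun i z => a i * z + b i) s ≤ K * (w.map a).prod)
    (κ : Fin n → ℕ) (hκ : ∑ i, κ i ≠ 0) :
    ∃ T : Finset ℝ, ↑T ⊆ affineOrbit a b s ∩ Set.Icc 0 (K * ∏ i, a i ^ κ i) ∧
      T.card = Nat.multinomial univ κ := by
  have hne : ∀ w ∈ permWords κ, w ≠ [] := fun w hw hnil =>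
    hκ (by rw [← length_of_mem_permWords hw, hnil, List.length_nil])
  refine ⟨(permWords κ).image fun w => w.foldr (fun i z => a i * z + b i) s, ?_, ?_⟩
  · intro y hy
    obtain ⟨w, hw, rfl⟩ := mem_image.1 (mem_coe.1 hy)
    refine ⟨⟨w, rfl⟩, foldr_affine_nonneg ha hb hs w, ?_⟩
    simpa only [prod_map_of_mem_permWords a hw] using hK w
  · rw [card_image_of_injOn, card_permWords]
    intro w hw w' hw' h
    exact eq_of_foldr_affine_eq hfree (hne w hw) (hne w' hw')
      (by rw [prod_map_of_mem_permWords a hw, prod_map_of_mem_permWords a hw']) h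

theorem exists_orbit_finset_card_ge_at_scale (ha : ∀ i, 1 < a i) (hb : ∀ i, 0 ≤ b i)
    (hsum : ∑ i, 1 / a i = 1)
    (hfree : ∀ w w' : List (Fin n), w ≠ [] → w' ≠ [] →
      (fun y => w.foldr (fun i z => a i * z + b i) y) =
        (fun y => w'.foldr (fun i z => a i * z + b i) y) → w = w')
    {s : ℝ} (hs : 0 ≤ s) :
    ∃ K, 1 ≤ K ∧ ∃ c₀ : ℝ, 0 < c₀ ∧ ∃ M : ℕ, ∀ m : ℕ, M ≤ m → ∃ T : Finset ℝ,
      ↑T ⊆ affineOrbit a b s ∩ Set.Icc 0 (K * (∏ i, a i ^ (a i)⁻¹) ^ m) ∧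
      c₀ * (∏ i, a i ^ (a i)⁻¹) ^ m / (m : ℝ) ^ (((n : ℝ) - 1) / 2) ≤ T.card := by
  have : Nonempty (Fin n) :=
    univ_nonempty_iff.1 (nonempty_of_sum_ne_zero (by rw [hsum]; exact one_ne_zero))
  have ha1 : ∀ i, 1 ≤ a i := fun i => (ha i).le
  have ha0 : ∀ i, 0 < a i := fun i => zero_lt_one.trans (ha i)
  obtain ⟨K, hK, hwK⟩ := exists_foldr_affine_le_mul_prod ha hb hs
  obtain ⟨M, hM⟩ := exists_nat_ge (∑ i, a i + 2 * n)
  have hA : 0 < ∏ i, a i := prod_pos fun i _ => ha0 i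
  refine ⟨K, hK, (exp (2 * n) * √2 * ∏ i, a i)⁻¹, by positivity, M, fun m hMm => ?_⟩
  set κ : Fin n → ℕ := fun i => ⌊m / a i⌋₊
  have hMm' : (M : ℝ) ≤ m := by exact_mod_cast hMm
  have ham : ∀ i, a i ≤ m := fun i =>
    (single_le_sum (fun j _ => (ha0 j).le) (mem_univ i)).trans
      (by linarith [n.cast_nonneg (α := ℝ)])
  have hnm : 2 * Fintype.card (Fin n) ≤ m := by
    rw [Fintype.card_fin]
    have : (2 * n : ℝ) ≤ m := by linarith [sum_nonneg fun i (_ : i ∈ univ) => (ha0 i).le]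
    exact_mod_cast this
  have hκ : ∑ i, κ i ≠ 0 := by
    obtain ⟨i⟩ := ‹Nonempty (Fin n)›
    exact fun h => (Nat.floor_pos.2 ((one_le_div (ha0 i)).2 (ham i))).ne'
      (sum_eq_zero_iff.1 h i (mem_univ i))
  obtain ⟨T, hT, hcard⟩ :=
    exists_orbit_finset_card_eq_multinomial (fun i => (ha0 i).le) hb hfree hs hwK κ hκ
  refine ⟨T, hT.trans (Set.inter_subset_inter_right _ (Set.Icc_subset_Icc_right ?_)), ?_⟩
  · exact mul_le_mul_of_nonneg_left (prod_pow_floor_div_le ha1 m) (by linarith)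
  have hmult := prod_pow_floor_div_le_multinomial ha1 hsum hnm ham
  rw [Fintype.card_fin] at hmult
  have hm0 : (0 : ℝ) < m := (ha0 (Classical.arbitrary _)).trans_le (ham _)
  rw [hcard, mul_div_assoc, inv_mul_le_iff₀ (by positivity), div_le_iff₀ (by positivity)]
  calc (∏ i, a i ^ (a i)⁻¹) ^ m ≤ (∏ i, a i ^ κ i) * ∏ i, a i :=
        pow_le_prod_pow_floor_div_mul_prod ha1 m
    _ ≤ exp (2 * n) * √2 * (m : ℝ) ^ (((n : ℝ) - 1) / 2) * Nat.multinomial univ κ * ∏ i, a i :=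
        mul_le_mul_of_nonneg_right hmult hA.le
    _ = _ := by ring

end Orbit

/-- **Sublinear lower bound for the Erdős–Graham question.**
If the affine maps `f i = a i * x + b i` (`a i > 1`, `b i ≥ 0`) form a basis of a free
semigroup and `∑ 1/a i = 1`, then for every `s ≥ 0` there are `c > 0` and `x₀` with
`|⟨F : s⟩ ∩ [0,x]| ≥ c·x/(log x)^((n-1)/2)` for all `x ≥ x₀`. -/
theorem stmt_7 (n : ℕ) (a b : Fin n → ℝ)
    (ha : ∀ i, 1 < a i) (hb : ∀ i, 0 ≤ b i)
    (hsum : ∑ i, 1 / a i = 1)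
    (hfree : ∀ w w' : List (Fin n), w ≠ [] → w' ≠ [] →
      (fun y => w.foldr (fun i z => a i * z + b i) y) =
        (fun y => w'.foldr (fun i z => a i * z + b i) y) → w = w')
    (s : ℝ) (hs : 0 ≤ s) :
    ∃ c : ℝ, 0 < c ∧ ∃ x₀ : ℝ, ∀ x : ℝ, x₀ ≤ x →
      ∃ T : Finset ℝ,
        (↑T ⊆ {y : ℝ | ∃ w : List (Fin n), y = w.foldr (fun i z => a i * z + b i) s} ∩
          Set.Icc 0 x) ∧
        c * x / Real.log x ^ (((n : ℝ) - 1) / 2) ≤ (T.card : ℝ) := by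
  have hn : 1 ≤ n := by
    rw [Nat.one_le_iff_ne_zero]
    rintro rfl
    simp at hsum
  have : Nonempty (Fin n) := ⟨⟨0, hn⟩⟩
  obtain ⟨K, hK, c₀, hc₀, M, hscale⟩ := exists_orbit_finset_card_ge_at_scale ha hb hsum hfree hs
  have he : 0 ≤ ((n : ℝ) - 1) / 2 := div_nonneg (sub_nonneg.2 (by exact_mod_cast hn)) zero_le_two
  exact exists_card_ge_mul_div_log_rpow (one_lt_prod_rpow_inv ha) hK hc₀ he M hscale
end

section
/- Let a_1,…,a_n be real numbers with a_i > 1 and ∑_{i=1}^n 1/a_i = 1, and for t > 0 set k_i(t) = ⌊t/a_i⌋ and N(t) = (k_1(t) + ⋯ + k_n(t))! / (k_1(t)! ⋯ k_n(t)!). Then as t → ∞, log N(t) = t · ∑_{i=1}^n (log a_i)/a_i − ((n−1)/2) · log t + O(1); that is, there is a constant C such that |log N(t) − t·∑_{i=1}^n (log a_i)/a_i + ((n−1)/2)·log t| ≤ C for all sufficiently large t. -/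
/-!
Mathlib's effective Stirling bounds give `0 ≤ log m! - (m log m - m + (log m)/2) ≤ 1` for
`m ≥ 1`, and since `m (log y - log m) ≤ y - m`, `log m` may be replaced by `log y` for any real
`y ≥ m` at a cost `O(y - m)`. Take `y = t` for `K = ∑ kᵢ` (here `t - K < n` because
`∑ t/aᵢ = t`) and `y = t/aᵢ` for `kᵢ`. Writing `log (t/aᵢ) = log t - log aᵢ`, the terms
`kᵢ log t - kᵢ` sum to `K log t - K`, the terms `(t/aᵢ) log aᵢ` sum to `t ∑ (log aᵢ)/aᵢ`,
and the halves of logarithms leave `(1 - n)/2 · log t`.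
-/

open Real Finset
open scoped Nat

theorem Real.log_factorial_le_stirling {m : ℕ} (hm : m ≠ 0) :
    log m ! ≤ m * log m - m + log m / 2 + 1 := by
  have hseq : Stirling.stirlingSeq m ≤ Stirling.stirlingSeq 1 := by
    obtain ⟨j, rfl⟩ := Nat.exists_eq_add_one_of_ne_zero hm
    exact Stirling.stirlingSeq'_antitone (Nat.zero_le j)
  have hlog := log_le_log ((sqrt_pos.2 pi_pos).trans_le (Stirling.sqrt_pi_le_stirlingSeq hm)) hseq
  have hm0 : (0 : ℝ) < m := by positivity
  rw [Stirling.log_stirlingSeq_formula, log_mul two_ne_zero hm0.ne',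
    log_div hm0.ne' (exp_ne_zero 1), log_exp, Stirling.stirlingSeq_one,
    log_div (exp_ne_zero 1) (by positivity), log_exp, log_sqrt zero_le_two] at hlog
  linarith

theorem Real.abs_log_factorial_sub_stirling_le_one {m : ℕ} (hm : m ≠ 0) :
    |log m ! - (m * log m - m + log m / 2)| ≤ 1 := by
  have hlower := Stirling.le_log_factorial_stirling hm
  have h2pi : 0 ≤ log (2 * π) := log_nonneg (by linarith [pi_gt_three])
  rw [abs_le]
  constructor <;> linarith [log_factorial_le_stirling hm]

theorem Real.mul_log_sub_log_le {u v : ℝ} (hu : 0 < u) (huv : u ≤ v) :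
    u * (log v - log u) ≤ v - u := by
  have h := log_le_sub_one_of_pos (div_pos (hu.trans_le huv) hu)
  rw [log_div (hu.trans_le huv).ne' hu.ne', le_sub_iff_add_le, le_div_iff₀ hu] at h
  linarith

theorem Real.abs_log_factorial_sub_stirling_of_le {m : ℕ} {y : ℝ} (hm : m ≠ 0)
    (hmy : m ≤ y) :
    |log m ! - (m * log y - m + log y / 2)| ≤ 1 + 2 * (y - m) := by
  have hm1 : (1 : ℝ) ≤ m := by exact_mod_cast Nat.one_le_iff_ne_zero.2 hm
  have hδ : 0 ≤ log y - log m := sub_nonneg.2 (log_le_log (by linarith) hmy)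
  have hmδ := mul_log_sub_log_le (by linarith) hmy
  have hE := abs_le.1 (abs_log_factorial_sub_stirling_le_one hm)
  rw [abs_le]
  constructor <;> nlinarith

theorem Finset.sum_floor_le_sum {ι : Type*} {s : Finset ι} {x : ι → ℝ}
    (hx : ∀ i ∈ s, 0 ≤ x i) :
    ∑ i ∈ s, (⌊x i⌋₊ : ℝ) ≤ ∑ i ∈ s, x i :=
  sum_le_sum fun i hi => Nat.floor_le (hx i hi)

theorem Finset.sum_sub_sum_floor_le {ι : Type*} (s : Finset ι) (x : ι → ℝ) :
    ∑ i ∈ s, x i - ∑ i ∈ s, (⌊x i⌋₊ : ℝ) ≤ #s := by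
  rw [← sum_sub_distrib, ← nsmul_one, ← sum_const]
  exact sum_le_sum fun i _ => by linarith [Nat.lt_floor_add_one (x i)]

theorem Real.log_multinomial {ι : Type*} (s : Finset ι) (k : ι → ℕ) :
    log (Nat.multinomial s k) = log (∑ i ∈ s, k i)! - ∑ i ∈ s, log (k i)! := by
  rw [← Nat.multinomial_spec s k, Nat.cast_mul, log_mul (by positivity)
    (Nat.cast_pos.2 (Nat.multinomial_pos s k)).ne', Nat.cast_prod,
    log_prod fun i _ => by positivity]
  ring

theorem Real.abs_log_factorial_floor_div_sub_le {a t : ℝ} (ha : 1 < a) (hat : a ≤ t) :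
    |log ⌊t / a⌋₊ ! - (⌊t / a⌋₊ * log t - ⌊t / a⌋₊ - t / a * log a + log t / 2)|
      ≤ 3 + log a := by
  set k := ⌊t / a⌋₊
  have hx : 1 ≤ t / a := (one_le_div (by linarith)).2 hat
  have hk : k ≠ 0 := (Nat.floor_pos.2 hx).ne'
  have hkx : (k : ℝ) ≤ t / a := Nat.floor_le (by linarith)
  have hxk : t / a < k + 1 := Nat.lt_floor_add_one _
  have hlog : log (t / a) = log t - log a := log_div (by linarith) (by linarith)
  have hla : 0 ≤ log a := log_nonneg ha.le
  have h := abs_le.1 (abs_log_factorial_sub_stirling_of_le hk hkx)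
  rw [hlog] at h
  rw [abs_le]
  constructor <;> nlinarith

/-- For reals `a i > 1` with `∑ 1/a i = 1`, letting `k i (t) = ⌊t/a i⌋` and
`N(t) = (∑ k i)!/∏ (k i)!`, one has
`log N(t) = t·∑ (log a i)/a i − ((n−1)/2)·log t + O(1)` as `t → ∞`. -/
theorem stmt_9 (n : ℕ) (hn : 0 < n) (a : Fin n → ℝ) (ha : ∀ i, 1 < a i)
    (hsum : ∑ i, 1 / a i = 1) :
    ∃ C : ℝ, ∃ t₀ : ℝ, ∀ t : ℝ, t₀ ≤ t →
      |Real.log ((Nat.multinomial Finset.univ fun i => ⌊t / a i⌋₊ : ℕ) : ℝ) -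
          t * (∑ i, Real.log (a i) / a i) + ((n : ℝ) - 1) / 2 * Real.log t| ≤ C := by
  refine ⟨1 + 2 * n + ∑ i, (3 + log (a i)), ∑ i, a i, fun t ht => ?_⟩
  have hat : ∀ i, a i ≤ t := fun i =>
    (single_le_sum (fun j _ => by linarith [ha j]) (mem_univ i)).trans ht
  set k : Fin n → ℕ := fun i => ⌊t / a i⌋₊
  set K := ∑ i, k i
  have hsum_div : ∑ i, t / a i = t := by
    simp_rw [div_eq_mul_one_div t, ← mul_sum, hsum, mul_one]
  have hk : ∀ i, k i ≠ 0 := fun i =>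
    (Nat.floor_pos.2 ((one_le_div (by linarith [ha i])).2 (hat i))).ne'
  have hK : K ≠ 0 := fun h => hk ⟨0, hn⟩ (sum_eq_zero_iff.1 h _ (mem_univ _))
  have hKt : (K : ℝ) ≤ t := by
    push_cast [K]; rw [← hsum_div]
    exact sum_floor_le_sum fun i _ => div_nonneg (by linarith [hat i, ha i]) (by linarith [ha i])
  have htK : t - K ≤ n := by
    simpa [K, hsum_div] using sum_sub_sum_floor_le univ fun i => t / a i
  have hsplit :
      log (Nat.multinomial univ k) - t * ∑ i, log (a i) / a i + ((n : ℝ) - 1) / 2 * log t =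
      (log K ! - (K * log t - K + log t / 2)) -
        ∑ i, (log (k i)! - (k i * log t - k i - t / a i * log (a i) + log t / 2)) := by
    rw [log_multinomial]
    simp only [sum_sub_distrib, sum_add_distrib, ← sum_mul, mul_sum, sum_const, card_univ,
      Fintype.card_fin, nsmul_eq_mul, K, Nat.cast_sum, div_mul_eq_mul_div, mul_div_assoc']
    ring
  rw [hsplit]
  calc _ ≤ |log K ! - (K * log t - K + log t / 2)| +
        ∑ i, |log (k i)! - (k i * log t - k i - t / a i * log (a i) + log t / 2)| :=
        (abs_sub _ _).trans (add_le_add_right (abs_sum_le_sum_abs _ _) _)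
    _ ≤ _ := add_le_add (by linarith [abs_log_factorial_sub_stirling_of_le hK hKt])
        (sum_le_sum fun i _ => abs_log_factorial_floor_div_sub_le (ha i) (hat i))
end

section
/- Let a_1,…,a_n be real numbers with a_i > 1 and ∑_{i=1}^n 1/a_i = 1, let d_1 > 0 and d_2 be real numbers, and define f_i(x) = a_i x + d_1 a_i ∑_{j < i} 1/a_j + d_2(a_i − 1) for i = 1,…,n. Then f_1,…,f_n freely generate a free semigroup under composition: for any two distinct nonempty finite words w, w' over {1,…,n}, the compositions f_w and f_{w'} are distinct functions. -/
/-!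
Each `f i` is an expanding affine bijection of `ℝ`, and its inverse `g i` maps the interval
`X = (-d₂ - d₁, -d₂)` onto the cell `(-d₂ - d₁ ∑_{j ≤ i} 1/a j, -d₂ - d₁ ∑_{j < i} 1/a j)`.
Because the `1/a j` are positive and sum to `1`, these cells are pairwise disjoint proper
subintervals of `X`. This is a ping-pong configuration for the semigroup generated by the `g i`:
a nonempty composition of them maps `X` into the cell of its outermost letter, which recovers
that letter, and peeling it off by injectivity recovers the whole word. Equal compositions
`f_w = f_w'` have equal inverses `g_{reverse w} = g_{reverse w'}`, hence `w = w'`.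
-/

open Function Set

section

variable {ι α : Type*}

theorem List.leftInverse_foldr_reverse {f g : ι → α → α} (h : ∀ i, LeftInverse (g i) (f i))
    (w : List ι) : LeftInverse (fun x => w.reverse.foldr g x) (fun x => w.foldr f x) := by
  induction w with
  | nil => exact fun _ => rfl
  | cons i u ih => intro x; simp [List.foldr_append, h i (u.foldr f x), ih x]

theorem List.foldr_reverse_eq_of_foldr_eq {f g : ι → α → α} (hgf : ∀ i, LeftInverse (g i) (f i))
    (hfg : ∀ i, LeftInverse (f i) (g i)) {w w' : List ι}
    (h : (fun x => w.foldr f x) = fun x => w'.foldr f x) :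
    (fun x => w.reverse.foldr g x) = fun x => w'.reverse.foldr g x := by
  have hright : RightInverse (fun x => w'.reverse.foldr g x) (fun x => w.foldr f x) := by
    show LeftInverse _ _
    simpa only [h, List.reverse_reverse] using List.leftInverse_foldr_reverse hfg w'.reverse
  exact (List.leftInverse_foldr_reverse hgf w).eq_rightInverse hright

theorem List.mapsTo_foldr {g : ι → α → α} {X : Set α} (h : ∀ i, MapsTo (g i) X X) (w : List ι) :
    MapsTo (fun x => w.foldr g x) X X := by
  induction w with
  | nil => exact mapsTo_id X
  | cons i u ih => exact (h i).comp ih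

theorem eq_of_eqOn_foldr_of_pingPong {g : ι → α → α} {X : Set α} {Y : ι → Set α}
    (hinj : ∀ i, InjOn (g i) X) (hmaps : ∀ i, MapsTo (g i) X (Y i)) (hsub : ∀ i, Y i ⊆ X)
    (hdisj : Pairwise (Disjoint on Y)) (hproper : ∀ i, ¬ X ⊆ Y i) {w w' : List ι}
    (h : EqOn (fun x => w.foldr g x) (fun x => w'.foldr g x) X) : w = w' := by
  have hX : ∀ u : List ι, MapsTo (fun x => u.foldr g x) X X :=
    List.mapsTo_foldr fun i => (hmaps i).mono_right (hsub i)
  have hcons : ∀ i (u : List ι), MapsTo (fun x => (i :: u).foldr g x) X (Y i) :=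
    fun i u => (hmaps i).comp (hX u)
  have hnil : ∀ i (u : List ι), ¬ EqOn (fun x => x) (fun x => (i :: u).foldr g x) X := by
    intro i u hid
    obtain ⟨x, hx, hxY⟩ := not_subset.1 (hproper i)
    exact hxY (by convert hcons i u hx using 1; exact hid hx)
  induction w generalizing w' with
  | nil =>
    cases w' with
    | nil => rfl
    | cons j v => exact (hnil j v h).elim
  | cons i u ih =>
    cases w' with
    | nil => exact (hnil i u h.symm).elim
    | cons j v =>
      obtain rfl | hij := eq_or_ne i j
      · exact congrArg _ (ih fun x hx => hinj i (hX u hx) (hX v hx) (h hx))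
      · obtain ⟨x, hx, -⟩ := not_subset.1 (hproper i)
        exact ((hdisj hij).ne_of_mem (hcons i u hx) (hcons j v hx) (h hx)).elim

end

noncomputable section

variable {ι : Type*} [LinearOrder ι] [LocallyFiniteOrderBot ι] (a : ι → ℝ) (d₁ d₂ : ℝ)

def expandingMap (i : ι) (z : ℝ) : ℝ :=
  a i * z + d₁ * a i * (∑ j ∈ Finset.Iio i, 1 / a j) + d₂ * (a i - 1)

def contractingMap (i : ι) (y : ℝ) : ℝ :=
  (y + d₂) / a i - d₁ * (∑ j ∈ Finset.Iio i, 1 / a j) - d₂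

def cell (i : ι) : Set ℝ :=
  Ioo (-d₂ - d₁ * ∑ j ∈ Finset.Iic i, 1 / a j) (-d₂ - d₁ * ∑ j ∈ Finset.Iio i, 1 / a j)

variable {a d₁ d₂}

theorem contractingMap_leftInverse (ha : ∀ i, a i ≠ 0) (i : ι) :
    LeftInverse (contractingMap a d₁ d₂ i) (expandingMap a d₁ d₂ i) := fun z => by
  unfold contractingMap expandingMap
  field_simp [ha i]
  ring

theorem expandingMap_leftInverse (ha : ∀ i, a i ≠ 0) (i : ι) :
    LeftInverse (expandingMap a d₁ d₂ i) (contractingMap a d₁ d₂ i) := fun y => by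
  unfold contractingMap expandingMap
  field_simp [ha i]
  ring

theorem mapsTo_contractingMap (ha : ∀ i, 0 < a i) (i : ι) :
    MapsTo (contractingMap a d₁ d₂ i) (Ioo (-d₂ - d₁) (-d₂)) (cell a d₁ d₂ i) := by
  rintro y ⟨hy₁, hy₂⟩
  have hlow : -d₁ / a i < (y + d₂) / a i := div_lt_div_of_pos_right (by linarith) (ha i)
  have hup : (y + d₂) / a i < 0 := div_neg_of_neg_of_pos (by linarith) (ha i)
  rw [cell, ← Finset.sum_Iio_add_eq_sum_Iic, contractingMap]
  constructor
  · linarith [show d₁ * (1 / a i) = -(-d₁ / a i) by ring]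
  · linarith

theorem cell_subset [Fintype ι] (ha : ∀ i, 0 < a i) (hsum : ∑ i, 1 / a i = 1) (hd₁ : 0 ≤ d₁)
    (i : ι) : cell a d₁ d₂ i ⊆ Ioo (-d₂ - d₁) (-d₂) := by
  have hnonneg : ∀ j, 0 ≤ 1 / a j := fun j => (one_div_pos.2 (ha j)).le
  have hIic : ∑ j ∈ Finset.Iic i, 1 / a j ≤ 1 :=
    (Finset.sum_le_sum_of_subset_of_nonneg (Finset.subset_univ _) fun j _ _ => hnonneg j).trans_eq
      hsum
  have hIio : 0 ≤ ∑ j ∈ Finset.Iio i, 1 / a j := Finset.sum_nonneg fun j _ => hnonneg j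
  exact Ioo_subset_Ioo (sub_le_sub_left (mul_le_of_le_one_right hd₁ hIic) _)
    (sub_le_self _ (mul_nonneg hd₁ hIio))

theorem pairwise_disjoint_cell (ha : ∀ i, 0 < a i) (hd₁ : 0 ≤ d₁) :
    Pairwise (Disjoint on cell a d₁ d₂) := by
  refine (pairwise_disjoint_on _).2 fun i j hij => Ioo_disjoint_Ioo.2 ?_
  have hsums : ∑ k ∈ Finset.Iic i, 1 / a k ≤ ∑ k ∈ Finset.Iio j, 1 / a k :=
    Finset.sum_le_sum_of_subset_of_nonneg
      (fun k hk => Finset.mem_Iio.2 ((Finset.mem_Iic.1 hk).trans_lt hij))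
      fun k _ _ => (one_div_pos.2 (ha k)).le
  exact (min_le_right _ _).trans
    ((sub_le_sub_left (mul_le_mul_of_nonneg_left hsums hd₁) _).trans (le_max_left _ _))

theorem not_subset_cell (ha : ∀ i, 1 < a i) (hd₁ : 0 < d₁) (i : ι) :
    ¬ Ioo (-d₂ - d₁) (-d₂) ⊆ cell a d₁ d₂ i := by
  rw [cell, Ioo_subset_Ioo_iff (by linarith), ← Finset.sum_Iio_add_eq_sum_Iic]
  rintro ⟨h₁, h₂⟩
  have : d₁ * (1 / a i) < d₁ :=
    mul_lt_of_lt_one_right hd₁ ((div_lt_one (one_pos.trans (ha i))).2 (ha i))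
  nlinarith

end

/-- For reals `a i > 1` with `∑ 1/a i = 1`, `d₁ > 0` and `d₂ : ℝ`, the functions
`f i (x) = a i * x + d₁ * a i * (∑_{j < i} 1/a j) + d₂ * (a i − 1)` freely generate a
free semigroup under composition: distinct nonempty words give distinct compositions. -/
theorem stmt_11 (n : ℕ) (a : Fin n → ℝ) (ha : ∀ i, 1 < a i)
    (hsum : ∑ i, 1 / a i = 1) (d₁ d₂ : ℝ) (hd₁ : 0 < d₁) :
    ∀ w w' : List (Fin n), w ≠ [] → w' ≠ [] → w ≠ w' →
      (fun y => w.foldr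
        (fun i z => a i * z + d₁ * a i * (∑ j ∈ Finset.Iio i, 1 / a j) +
          d₂ * (a i - 1)) y) ≠
      (fun y => w'.foldr
        (fun i z => a i * z + d₁ * a i * (∑ j ∈ Finset.Iio i, 1 / a j) +
          d₂ * (a i - 1)) y) := by
  intro w w' _ _ hne heq
  have hpos : ∀ i, 0 < a i := fun i => one_pos.trans (ha i)
  have hne0 : ∀ i, a i ≠ 0 := fun i => (hpos i).ne'
  have hinv := List.foldr_reverse_eq_of_foldr_eq (f := expandingMap a d₁ d₂)
    (contractingMap_leftInverse hne0) (expandingMap_leftInverse hne0) heq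
  refine hne (List.reverse_injective (eq_of_eqOn_foldr_of_pingPong
    (fun i => (expandingMap_leftInverse hne0 i).injective.injOn) (mapsTo_contractingMap hpos)
    (cell_subset hpos hsum hd₁.le) (pairwise_disjoint_cell hpos hd₁.le) (not_subset_cell ha hd₁)
    fun y _ => congrFun hinv y))
end

section
/- Let F = {f_i(x) = a_i x + b_i : i = 1,…,n} with integer coefficients, a_i > 1 and b_i ≥ 0, and suppose F provides a system of exact covering congruences, i.e. the arithmetic progressions f_1(ℤ),…,f_n(ℤ) are pairwise disjoint and their union is all of ℤ. Then for every integer s ≥ 0, the orbit set ⟨F : s⟩ has positive lower density: there exist c > 0 and x_0 such that |⟨F : s⟩ ∩ [0,x]| ≥ c·x for all x ≥ x_0. -/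
lemma prog_count (a L bb : ℤ) (ha : 0 < a) (hd : a ∣ L) :
    ((Finset.Ico (0:ℤ) L).filter (fun r => r % a = bb % a)).card = (L / a).toNat := by
  have hLa : L / a * a = L := Int.ediv_mul_cancel hd
  have hr0 : 0 ≤ bb % a := Int.emod_nonneg bb (ne_of_gt ha)
  have hr1 : bb % a < a := Int.emod_lt_of_pos bb ha
  have key : (Finset.Ico (0:ℤ) (L/a)).card
      = ((Finset.Ico (0:ℤ) L).filter (fun r => r % a = bb % a)).card := by
    apply Finset.card_bij (fun (q : ℤ) (_ : q ∈ Finset.Ico (0:ℤ) (L/a)) => a * q + bb % a)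
    · intro q hq
      simp only [Finset.mem_Ico] at hq
      refine Finset.mem_filter.2 ⟨Finset.mem_Ico.2 ⟨by nlinarith, by nlinarith⟩, ?_⟩
      rw [add_comm, Int.add_mul_emod_self_left, Int.emod_emod_of_dvd bb dvd_rfl]
    · intro q hq q' hq' h
      have h' : a * q + bb % a = a * q' + bb % a := h
      have : a * q = a * q' := by linarith
      exact mul_left_cancel₀ (ne_of_gt ha) this
    · intro r hr
      simp only [Finset.mem_filter, Finset.mem_Ico] at hr
      obtain ⟨⟨h0, h1⟩, h2⟩ := hr
      have hid : a * (r / a) + r % a = r := Int.mul_ediv_add_emod r a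
      have hrr0 : 0 ≤ r % a := Int.emod_nonneg r (ne_of_gt ha)
      refine ⟨r / a, Finset.mem_Ico.2 ⟨Int.ediv_nonneg h0 (le_of_lt ha), ?_⟩, ?_⟩
      · by_contra hcon
        push_neg at hcon
        have h3 : a * (L/a) ≤ a * (r/a) := mul_le_mul_of_nonneg_left hcon (le_of_lt ha)
        nlinarith
      · rw [h2] at hid
        linarith
  rw [← key, Int.card_Ico]
  norm_num

lemma kraft {n : ℕ} (a b : Fin n → ℤ) (ha : ∀ i, 1 < a i)
    (hcover : (⋃ i, {y : ℤ | ∃ m : ℤ, y = a i * m + b i}) = Set.univ) :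
    (1:ℝ) ≤ ∑ i, ((a i : ℝ))⁻¹ := by
  classical
  have hapos : ∀ i, (0:ℤ) < a i := fun i => lt_trans one_pos (ha i)
  set L : ℤ := ∏ i, a i with hL
  have hLpos : 0 < L := Finset.prod_pos (fun i _ => hapos i)
  have hdvd : ∀ i, a i ∣ L := fun i => Finset.dvd_prod_of_mem _ (Finset.mem_univ i)
  have hmem : ∀ r : ℤ, ∃ i : Fin n, r % a i = b i % a i := by
    intro r
    have hr : r ∈ (⋃ i, {y : ℤ | ∃ m : ℤ, y = a i * m + b i}) := by
      rw [hcover]; trivial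
    rw [Set.mem_iUnion] at hr
    obtain ⟨i, m, hm⟩ := hr
    refine ⟨i, ?_⟩
    rw [hm, show a i * m + b i = b i + m * a i from by ring, Int.add_mul_emod_self_right]
  choose g hg using hmem
  have hcard : (Finset.Ico (0:ℤ) L).card
      = ∑ i, ((Finset.Ico (0:ℤ) L).filter (fun r => g r = i)).card :=
    Finset.card_eq_sum_card_fiberwise (fun x _ => Finset.mem_univ _)
  have hle : ∀ i, ((Finset.Ico (0:ℤ) L).filter (fun r => g r = i)).card ≤ (L / a i).toNat := by
    intro i
    rw [← prog_count (a i) L (b i) (hapos i) (hdvd i)]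
    apply Finset.card_le_card
    intro r hr
    simp only [Finset.mem_filter] at hr ⊢
    exact ⟨hr.1, hr.2 ▸ hg r⟩
  have hNat : L.toNat ≤ ∑ i, (L / a i).toNat := by
    calc L.toNat = (L - 0).toNat := by norm_num
    _ = (Finset.Ico (0:ℤ) L).card := (Int.card_Ico 0 L).symm
    _ = ∑ i, ((Finset.Ico (0:ℤ) L).filter (fun r => g r = i)).card := hcard
    _ ≤ ∑ i, (L / a i).toNat := Finset.sum_le_sum (fun i _ => hle i)
  have hLcast : ∀ i, ((L / a i).toNat : ℝ) = (L : ℝ) * ((a i : ℝ))⁻¹ := by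
    intro i
    have h1 : (0:ℤ) ≤ L / a i := Int.ediv_nonneg (le_of_lt hLpos) (le_of_lt (hapos i))
    have h2 : L / a i * a i = L := Int.ediv_mul_cancel (hdvd i)
    have h3 : ((L / a i : ℤ) : ℝ) * (a i : ℝ) = (L : ℝ) := by exact_mod_cast h2
    have h4 : ((L / a i).toNat : ℝ) = ((L / a i : ℤ) : ℝ) := by
      exact_mod_cast Int.toNat_of_nonneg h1
    have h5 : (0:ℝ) < (a i : ℝ) := by exact_mod_cast hapos i
    rw [h4]
    field_simp
    linarith [h3]
  have hfinal : (L : ℝ) ≤ (L : ℝ) * ∑ i, ((a i : ℝ))⁻¹ := by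
    rw [Finset.mul_sum]
    calc (L : ℝ) = (L.toNat : ℝ) := by
          exact_mod_cast (Int.toNat_of_nonneg (le_of_lt hLpos)).symm
    _ ≤ ((∑ i, (L / a i).toNat : ℕ) : ℝ) := by exact_mod_cast hNat
    _ = ∑ i, ((L / a i).toNat : ℝ) := by push_cast; ring
    _ = ∑ i, (L : ℝ) * ((a i : ℝ))⁻¹ := Finset.sum_congr rfl (fun i _ => hLcast i)
  have hLR : (0:ℝ) < (L:ℝ) := by exact_mod_cast hLpos
  by_contra hcon
  push_neg at hcon
  nlinarith [hfinal, hLR, hcon]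

/-- If the integer affine maps `f i = a i * x + b i` (`a i > 1`, `b i ≥ 0`) give a system
of exact covering congruences (the progressions `f i (ℤ)` partition `ℤ`), then for every
integer `s ≥ 0` the orbit set `⟨F : s⟩` has positive lower density: there are `c > 0`
and `x₀` with `|⟨F : s⟩ ∩ [0,x]| ≥ c·x` for all `x ≥ x₀`. -/
theorem stmt_14 (n : ℕ) (a b : Fin n → ℤ) (ha : ∀ i, 1 < a i) (hb : ∀ i, 0 ≤ b i)
    (hdisj : ∀ i j, i ≠ j →
      Disjoint {y : ℤ | ∃ m : ℤ, y = a i * m + b i}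
               {y : ℤ | ∃ m : ℤ, y = a j * m + b j})
    (hcover : (⋃ i, {y : ℤ | ∃ m : ℤ, y = a i * m + b i}) = Set.univ)
    (s : ℤ) (hs : 0 ≤ s) :
    ∃ c : ℝ, 0 < c ∧ ∃ x₀ : ℝ, ∀ x : ℝ, x₀ ≤ x →
      c * x ≤
        (({y : ℤ | ∃ w : List (Fin n), y = w.foldr (fun i z => a i * z + b i) s} ∩
            {y : ℤ | 0 ≤ y ∧ (y : ℝ) ≤ x}).ncard : ℝ) := by
  classical
  have hapos : ∀ i, (0:ℤ) < a i := fun i => lt_trans one_pos (ha i)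
  have hn : n ≠ 0 := by
    rintro rfl
    have h0 : (0:ℤ) ∈ (⋃ i : Fin 0, {y : ℤ | ∃ m : ℤ, y = a i * m + b i}) := by
      rw [hcover]; trivial
    rw [Set.mem_iUnion] at h0
    obtain ⟨i, -⟩ := h0
    exact i.elim0
  set O : Set ℤ := {y : ℤ | ∃ w : List (Fin n), y = w.foldr (fun i z => a i * z + b i) s}
    with hO
  have hsO : s ∈ O := ⟨[], rfl⟩
  have hstep : ∀ i y, y ∈ O → a i * y + b i ∈ O := by
    rintro i y ⟨w, hw⟩
    exact ⟨i :: w, by rw [List.foldr_cons, ← hw]⟩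
  have hfin : ∀ X : ℤ, (O ∩ Set.Icc 0 X).Finite :=
    fun X => (Set.finite_Icc 0 X).subset Set.inter_subset_right
  -- constants
  set K : ℤ := ∑ i, (a i + b i) with hKdef
  have hterm : ∀ i, (0:ℤ) ≤ a i + b i := fun i => by linarith [hapos i, hb i]
  have hK : ∀ i, a i + b i ≤ K :=
    fun i => Finset.single_le_sum (fun j _ => hterm j) (Finset.mem_univ i)
  have hK2 : 2 ≤ K := by
    obtain ⟨i⟩ := Fin.pos_iff_nonempty.mp (Nat.pos_of_ne_zero hn)
    have := hK i; have := ha i; have := hb i; linarith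
  set X₁ : ℤ := s + 1 + ∑ i, (a i * s + b i) with hX₁def
  have hterm2 : ∀ i, (0:ℤ) ≤ a i * s + b i := fun i => by nlinarith [hapos i, hb i, hs]
  have hX₁i : ∀ i, a i * s + b i + s + 1 ≤ X₁ := by
    intro i
    have := Finset.single_le_sum (fun j (_ : j ∈ Finset.univ) => hterm2 j) (Finset.mem_univ i)
    rw [hX₁def]; linarith
  have hX₁s : s + 1 ≤ X₁ := by
    have : (0:ℤ) ≤ ∑ i, (a i * s + b i) := Finset.sum_nonneg (fun i _ => hterm2 i)
    rw [hX₁def]; linarith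
  set D : ℤ := X₁ + K with hDdef
  have hD : 0 < D := by rw [hDdef]; linarith
  have hDR : (0:ℝ) < (D:ℝ) := by exact_mod_cast hD
  have hkraft := kraft a b ha hcover
  -- main induction
  have key : ∀ k : ℕ, ∀ X : ℤ, s ≤ X → X.toNat = k →
      ((X:ℝ) + (K:ℝ)) ≤ (D:ℝ) * ((O ∩ Set.Icc 0 X).ncard : ℝ) := by
    intro k
    induction k using Nat.strong_induction_on with
    | _ k IH =>
      intro X hsX hXk
      have hX0 : (0:ℤ) ≤ X := le_trans hs hsX
      by_cases hbig : X < X₁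
      · have h1 : 0 < (O ∩ Set.Icc 0 X).ncard :=
          (Set.ncard_pos (hfin X)).2 ⟨s, hsO, hs, hsX⟩
        have h1' : (1:ℝ) ≤ ((O ∩ Set.Icc 0 X).ncard : ℝ) := by exact_mod_cast h1
        have hXlt : (X:ℝ) + 1 ≤ (X₁:ℝ) := by exact_mod_cast hbig
        have hKR : ((K:ℝ)) = (K:ℤ) := rfl
        have hDX : (D:ℝ) = (X₁:ℝ) + (K:ℝ) := by rw [hDdef]; push_cast; ring
        nlinarith [h1', hXlt, hDR]
      · push_neg at hbig
        set m : Fin n → ℤ := fun i => (X - b i) / a i with hmdef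
        have hid : ∀ i, a i * m i + (X - b i) % a i = X - b i :=
          fun i => Int.mul_ediv_add_emod (X - b i) (a i)
        have hr0 : ∀ i, 0 ≤ (X - b i) % a i :=
          fun i => Int.emod_nonneg _ (ne_of_gt (hapos i))
        have hr1 : ∀ i, (X - b i) % a i < a i := fun i => Int.emod_lt_of_pos _ (hapos i)
        have hms : ∀ i, s ≤ m i := by
          intro i
          by_contra hcon
          push_neg at hcon
          have h2 : a i * m i ≤ a i * (s - 1) :=
            mul_le_mul_of_nonneg_left (by linarith) (le_of_lt (hapos i))
          have := hX₁i i
          nlinarith [hid i, hr1 i, hapos i]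
        have hmX : ∀ i, m i < X := by
          intro i
          have hm0 : 0 ≤ m i := le_trans hs (hms i)
          have h2 : 2 * m i ≤ a i * m i := by nlinarith [ha i]
          nlinarith [hid i, hr0 i, hb i, hX₁s, hbig]
        -- counting
        set P : Fin n → Finset ℤ :=
          fun i => ((hfin (m i)).toFinset).image (fun y => a i * y + b i) with hPdef
        have hPsub : Finset.univ.biUnion P ⊆ (hfin X).toFinset := by
          intro y hy
          rw [Finset.mem_biUnion] at hy
          obtain ⟨i, -, hyi⟩ := hy
          rw [hPdef] at hyi
          simp only [Finset.mem_image, Set.Finite.mem_toFinset] at hyi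
          obtain ⟨z, ⟨hzO, hz0, hzm⟩, rfl⟩ := hyi
          rw [Set.Finite.mem_toFinset]
          refine ⟨hstep i z hzO, ?_, ?_⟩
          · nlinarith [hapos i, hb i]
          · have := mul_le_mul_of_nonneg_left hzm (le_of_lt (hapos i))
            nlinarith [hid i, hr0 i]
        have hPdisj : ∀ i ∈ Finset.univ, ∀ j ∈ Finset.univ, i ≠ j → Disjoint (P i) (P j) := by
          intro i _ j _ hij
          rw [Finset.disjoint_left]
          intro y hyi hyj
          rw [hPdef] at hyi hyj
          simp only [Finset.mem_image, Set.Finite.mem_toFinset] at hyi hyj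
          obtain ⟨z, -, hz⟩ := hyi
          obtain ⟨z', -, hz'⟩ := hyj
          exact Set.disjoint_left.1 (hdisj i j hij) ⟨z, hz.symm⟩ ⟨z', hz'.symm⟩
        have hinj : ∀ i, Function.Injective (fun y => a i * y + b i) := by
          intro i y z h
          simp only at h
          exact mul_left_cancel₀ (ne_of_gt (hapos i)) (by linarith)
        have hcard2 : ∀ i, (P i).card = (O ∩ Set.Icc 0 (m i)).ncard := by
          intro i
          rw [hPdef, Finset.card_image_of_injective _ (hinj i),
            ← Set.ncard_eq_toFinset_card _ (hfin (m i))]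
        have hsum : ∑ i, (O ∩ Set.Icc 0 (m i)).ncard ≤ (O ∩ Set.Icc 0 X).ncard := by
          calc ∑ i, (O ∩ Set.Icc 0 (m i)).ncard = ∑ i, (P i).card :=
                Finset.sum_congr rfl (fun i _ => (hcard2 i).symm)
          _ = (Finset.univ.biUnion P).card := (Finset.card_biUnion hPdisj).symm
          _ ≤ (hfin X).toFinset.card := Finset.card_le_card hPsub
          _ = (O ∩ Set.Icc 0 X).ncard := (Set.ncard_eq_toFinset_card _ (hfin X)).symm
        -- induction hypothesis
        have hIH : ∀ i, ((m i : ℝ) + (K:ℝ)) ≤ (D:ℝ) * ((O ∩ Set.Icc 0 (m i)).ncard : ℝ) := by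
          intro i
          refine IH ((m i).toNat) ?_ (m i) (hms i) rfl
          have h1 := hms i
          have h2 := hmX i
          omega
        -- kraft chain
        have hKi : ∀ i, ((X:ℝ) + (K:ℝ)) ≤ (a i : ℝ) * ((m i : ℝ) + (K:ℝ)) := by
          intro i
          have hZ : X + K ≤ a i * (m i + K) := by nlinarith [hid i, hr1 i, hK i, ha i, hb i, hK2]
          exact_mod_cast hZ
        have hfrac : ∀ i, ((X:ℝ) + (K:ℝ)) * ((a i : ℝ))⁻¹ ≤ (m i : ℝ) + (K:ℝ) := by
          intro i
          have hai : (0:ℝ) < (a i : ℝ) := by exact_mod_cast hapos i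
          rw [← div_eq_mul_inv, div_le_iff₀ hai]
          nlinarith [hKi i]
        have hXK0 : (0:ℝ) ≤ (X:ℝ) + (K:ℝ) := by
          have : (0:ℤ) ≤ X + K := by linarith
          exact_mod_cast this
        calc ((X:ℝ) + (K:ℝ)) = ((X:ℝ) + (K:ℝ)) * 1 := by ring
        _ ≤ ((X:ℝ) + (K:ℝ)) * ∑ i, ((a i : ℝ))⁻¹ := by
            exact mul_le_mul_of_nonneg_left hkraft hXK0
        _ = ∑ i, ((X:ℝ) + (K:ℝ)) * ((a i : ℝ))⁻¹ := Finset.mul_sum _ _ _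
        _ ≤ ∑ i, ((m i : ℝ) + (K:ℝ)) := Finset.sum_le_sum (fun i _ => hfrac i)
        _ ≤ ∑ i, (D:ℝ) * ((O ∩ Set.Icc 0 (m i)).ncard : ℝ) :=
            Finset.sum_le_sum (fun i _ => hIH i)
        _ = (D:ℝ) * ∑ i, ((O ∩ Set.Icc 0 (m i)).ncard : ℝ) := (Finset.mul_sum _ _ _).symm
        _ ≤ (D:ℝ) * ((O ∩ Set.Icc 0 X).ncard : ℝ) := by
            have : (∑ i, ((O ∩ Set.Icc 0 (m i)).ncard : ℝ)) ≤ ((O ∩ Set.Icc 0 X).ncard : ℝ) := by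
              exact_mod_cast hsum
            exact mul_le_mul_of_nonneg_left this (le_of_lt hDR)
  -- conclusion
  refine ⟨(D:ℝ)⁻¹, by positivity, (X₁:ℝ), ?_⟩
  intro x hx
  set X : ℤ := ⌊x⌋ with hXdef
  have hX₁X : X₁ ≤ X := Int.le_floor.2 hx
  have hsX : s ≤ X := by linarith [hX₁s]
  have hset : {y : ℤ | 0 ≤ y ∧ (y : ℝ) ≤ x} = Set.Icc 0 X := by
    ext y
    simp only [Set.mem_setOf_eq, Set.mem_Icc, hXdef, Int.le_floor]
  rw [hset]
  have hkey := key X.toNat X hsX rfl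
  have hx1 : x < (X:ℝ) + 1 := Int.lt_floor_add_one x
  have hKR : (2:ℝ) ≤ (K:ℝ) := by exact_mod_cast hK2
  have hfinalZ : x ≤ (D:ℝ) * ((O ∩ Set.Icc 0 X).ncard : ℝ) := by linarith
  rw [inv_mul_le_iff₀ hDR]
  exact hfinalZ
end

section
/- Let f_1,…,f_n be affine functions f_i(x) = a_i x + b_i with integer coefficients, a_i > 1, providing a system of exact covering congruences (the progressions f_i(ℤ) partition ℤ). Then ∑_{i=1}^n 1/a_i = 1. -/
/-!
Count one period: with `L = ∏ aᵢ`, the progression `aᵢ ℤ + bᵢ` meets `[0, L)` in exactly `L / aᵢ`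
points, and these traces partition `[0, L)`, so `∑ L / aᵢ = L`.
-/

open Finset

theorem Int.setOf_exists_eq_mul_add (a b : ℤ) :
    {y : ℤ | ∃ m : ℤ, y = a * m + b} = {y | y ≡ b [ZMOD a]} := by
  ext y
  simp only [Set.mem_ofPred_eq, Int.modEq_comm, Int.modEq_iff_dvd, dvd_def, sub_eq_iff_eq_add]

theorem Int.card_Ico_filter_modEq_of_dvd {r L : ℤ} (hr : 0 < r) (hrL : r ∣ L) (hL : 0 ≤ L)
    (c v : ℤ) : (#{x ∈ Ico c (c + L) | x ≡ v [ZMOD r]} : ℤ) = L / r := by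
  obtain ⟨k, rfl⟩ := hrL
  have hk : 0 ≤ k := nonneg_of_mul_nonneg_right hL hr
  have hr' : (r : ℚ) ≠ 0 := by exact_mod_cast hr.ne'
  have hshift : (((c + r * k : ℤ) : ℚ) - v) / r = (c - v) / r + k := by
    push_cast; field_simp; ring
  rw [Int.Ico_filter_modEq_card _ _ hr, Int.mul_ediv_cancel_left _ hr.ne', hshift,
    Int.ceil_add_intCast]
  omega

open Classical in
theorem Finset.card_eq_sum_card_filter_of_partition {α ι : Type*} [Fintype ι] (S : ι → Set α)
    (hdisj : Pairwise (Function.onFun Disjoint S)) (hcover : ⋃ i, S i = Set.univ) (s : Finset α) :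
    #s = ∑ i, #{x ∈ s | x ∈ S i} := by
  have hs : s = univ.biUnion fun i ↦ {x ∈ s | x ∈ S i} := by
    ext x
    have hx : x ∈ ⋃ i, S i := hcover ▸ Set.mem_univ x
    simpa [Set.mem_iUnion] using fun _ ↦ hx
  conv_lhs => rw [hs]
  refine card_biUnion fun i _ j _ hij ↦ disjoint_filter.2 fun x _ hxi hxj ↦ ?_
  exact Set.disjoint_left.1 (hdisj hij) hxi hxj

theorem sum_one_div_eq_one_of_sum_ediv_eq {ι : Type*} (s : Finset ι) (a : ι → ℤ) {L : ℤ}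
    (hL : L ≠ 0) (hdvd : ∀ i ∈ s, a i ∣ L) (hsum : ∑ i ∈ s, L / a i = L) :
    ∑ i ∈ s, (1 : ℝ) / a i = 1 := by
  have ha : ∀ i ∈ s, (a i : ℝ) ≠ 0 := fun i hi h ↦
    hL (zero_dvd_iff.1 (Int.cast_eq_zero.1 h ▸ hdvd i hi))
  have hsum' : ∑ i ∈ s, (L : ℝ) / a i = L :=
    calc ∑ i ∈ s, (L : ℝ) / a i = ∑ i ∈ s, ((L / a i : ℤ) : ℝ) :=
          sum_congr rfl fun i hi ↦ (Int.cast_div (hdvd i hi) (ha i hi)).symm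
      _ = L := by exact_mod_cast hsum
  calc ∑ i ∈ s, (1 : ℝ) / a i = (∑ i ∈ s, (L : ℝ) / a i) / L := by
        rw [sum_div]
        refine sum_congr rfl fun i hi ↦ ?_
        field_simp [ha i hi]
    _ = 1 := by rw [hsum', div_self (Int.cast_ne_zero.2 hL)]

/-- If the integer affine maps `f i = a i * x + b i` (`a i > 1`) give a system of exact
covering congruences (the progressions `f i (ℤ)` partition `ℤ`), then `∑ 1/a i = 1`. -/
theorem stmt_15 (n : ℕ) (a b : Fin n → ℤ) (ha : ∀ i, 1 < a i)
    (hdisj : ∀ i j, i ≠ j →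
      Disjoint {y : ℤ | ∃ m : ℤ, y = a i * m + b i}
               {y : ℤ | ∃ m : ℤ, y = a j * m + b j})
    (hcover : (⋃ i, {y : ℤ | ∃ m : ℤ, y = a i * m + b i}) = Set.univ) :
    ∑ i, (1 : ℝ) / (a i : ℝ) = 1 := by
  have hpos : ∀ i, 0 < a i := fun i ↦ one_pos.trans (ha i)
  set L := ∏ i, a i
  have hL : 0 < L := prod_pos fun i _ ↦ hpos i
  have hdvd : ∀ i, a i ∣ L := fun i ↦ dvd_prod_of_mem a (mem_univ i)
  simp only [Int.setOf_exists_eq_mul_add] at hdisj hcover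
  have hsum : ∑ i, L / a i = L := by
    have hcard := card_eq_sum_card_filter_of_partition _ (fun i j ↦ hdisj i j) hcover (Ico 0 L)
    calc ∑ i, L / a i = ∑ i, (#{x ∈ Ico 0 (0 + L) | x ≡ b i [ZMOD a i]} : ℤ) :=
          sum_congr rfl fun i _ ↦ (Int.card_Ico_filter_modEq_of_dvd (hpos i) (hdvd i) hL.le _ _).symm
      _ = #(Ico 0 L) := by simp only [hcard, zero_add, Nat.cast_sum, Set.mem_ofPred_eq]
      _ = L := by simp [hL.le]
  exact sum_one_div_eq_one_of_sum_ediv_eq _ _ hL.ne' (fun i _ ↦ hdvd i) hsum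
end

section
/- The three affine functions f_1(x) = 2x + 1, f_2(x) = 4x + 2, f_3(x) = 4x + 4 form a system of exact covering congruences (the progressions f_1(ℤ), f_2(ℤ), f_3(ℤ) partition ℤ), and consequently for every integer s ≥ 0 the orbit set ⟨{f_1, f_2, f_3} : s⟩ has positive lower density: there exist c > 0 and x_0 such that |⟨{f_1,f_2,f_3} : s⟩ ∩ [0,x]| ≥ c·x for all x ≥ x_0. -/
namespace Stmt16

def step (i : Fin 3) (z : ℤ) : ℤ := ![(2:ℤ),4,4] i * z + ![(1:ℤ),2,4] i

def wt : Fin 3 → ℕ := ![1,2,2]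

def W (w : List (Fin 3)) : ℕ := (w.map wt).sum

lemma W_cons (i : Fin 3) (w : List (Fin 3)) : W (i :: w) = wt i + W w := rfl

def v (s : ℤ) (w : List (Fin 3)) : ℤ := w.foldr step s

lemma v_nil (s : ℤ) : v s [] = s := rfl
lemma v_cons (s : ℤ) (i : Fin 3) (w : List (Fin 3)) : v s (i :: w) = step i (v s w) := rfl

lemma le_v (s : ℤ) (hs : 0 ≤ s) : ∀ w, s ≤ v s w
  | [] => le_refl s
  | (i :: w) => by
      have h := le_v s hs w
      rw [v_cons]
      fin_cases i <;> simp [step] <;> omega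

lemma lt_v_cons (s : ℤ) (hs : 0 ≤ s) (i : Fin 3) (w : List (Fin 3)) :
    v s w < v s (i :: w) := by
  have h := le_v s hs w
  rw [v_cons]
  fin_cases i <;> simp [step] <;> omega

lemma v_le (s : ℤ) (hs : 0 ≤ s) : ∀ w, v s w + 2 ≤ 2 ^ (W w) * (s + 2)
  | [] => by simp [v_nil, W]
  | (i :: w) => by
      have h := v_le s hs w
      rw [v_cons, W_cons]
      fin_cases i <;>
        simp [step, wt, pow_add] <;> nlinarith [h]

lemma step_inj (i j : Fin 3) (z z' : ℤ) (h : step i z = step j z') : i = j ∧ z = z' := by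
  fin_cases i <;> fin_cases j <;> simp [step] at h <;>
    first
      | exact ⟨rfl, by omega⟩
      | exact absurd h (by omega)

lemma v_inj (s : ℤ) (hs : 0 ≤ s) : ∀ w w', v s w = v s w' → w = w'
  | [], [], _ => rfl
  | [], (j :: t'), h => by
      have := lt_v_cons s hs j t'
      have := le_v s hs t'
      rw [v_nil] at h; omega
  | (i :: t), [], h => by
      have := lt_v_cons s hs i t
      have := le_v s hs t
      rw [v_nil] at h; omega
  | (i :: t), (j :: t'), h => by
      rw [v_cons, v_cons] at h
      obtain ⟨hij, hzz⟩ := step_inj i j _ _ h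
      have := v_inj s hs t t' hzz
      rw [hij, this]

def L : ℕ → Finset (List (Fin 3))
  | 0 => {[]}
  | 1 => {[0]}
  | (k+2) => ((L (k+1)).image (List.cons 0)) ∪
      (((L k).image (List.cons 1)) ∪ ((L k).image (List.cons 2)))

lemma W_of_mem_L : ∀ k w, w ∈ L k → W w = k := by
  intro k
  induction k using Nat.strong_induction_on with
  | _ k ih =>
    match k with
    | 0 => intro w hw; simp [L] at hw; simp [hw, W]
    | 1 => intro w hw; simp [L] at hw; simp [hw, W, wt]
    | (k+2) =>
      intro w hw
      simp [L, Finset.mem_union, Finset.mem_image] at hw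
      rcases hw with ⟨t, ht, rfl⟩ | ⟨t, ht, rfl⟩ | ⟨t, ht, rfl⟩ <;>
        rw [W_cons] <;>
        [rw [ih (k+1) (by omega) t ht]; rw [ih k (by omega) t ht];
         rw [ih k (by omega) t ht]] <;> simp [wt] <;> omega

lemma card_L : ∀ k, 2 ^ k ≤ 3 * (L k).card := by
  intro k
  induction k using Nat.strong_induction_on with
  | _ k ih =>
    match k with
    | 0 => simp [L]
    | 1 => simp [L]
    | (k+2) =>
      have i1 := ih (k+1) (by omega)
      have i0 := ih k (by omega)
      have hc1 : ((L (k+1)).image (List.cons (0 : Fin 3))).card = (L (k+1)).card :=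
        Finset.card_image_of_injective _ (fun a b h => by injection h)
      have hc2 : ((L k).image (List.cons (1 : Fin 3))).card = (L k).card :=
        Finset.card_image_of_injective _ (fun a b h => by injection h)
      have hc3 : ((L k).image (List.cons (2 : Fin 3))).card = (L k).card :=
        Finset.card_image_of_injective _ (fun a b h => by injection h)
      have hd23 : Disjoint ((L k).image (List.cons (1 : Fin 3)))
          ((L k).image (List.cons (2 : Fin 3))) := by
        rw [Finset.disjoint_left]
        rintro w hw1 hw2
        simp [Finset.mem_image] at hw1 hw2
        obtain ⟨t, _, rfl⟩ := hw1
        obtain ⟨t', _, ht'⟩ := hw2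
        exact absurd (List.head_eq_of_cons_eq ht') (by decide)
      have hd1 : Disjoint ((L (k+1)).image (List.cons (0 : Fin 3)))
          (((L k).image (List.cons (1 : Fin 3))) ∪ ((L k).image (List.cons (2 : Fin 3)))) := by
        rw [Finset.disjoint_left]
        rintro w hw1 hw2
        simp [Finset.mem_image] at hw1 hw2
        obtain ⟨t, _, rfl⟩ := hw1
        rcases hw2 with ⟨t', _, ht'⟩ | ⟨t', _, ht'⟩ <;>
          exact absurd (List.head_eq_of_cons_eq ht') (by decide)
      have : (L (k+2)).card = (L (k+1)).card + ((L k).card + (L k).card) := by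
        rw [L, Finset.card_union_of_disjoint hd1,
          Finset.card_union_of_disjoint hd23, hc1, hc2, hc3]
      rw [this]
      ring_nf
      ring_nf at i1 i0
      omega

theorem main (s : ℤ) (hs : 0 ≤ s) :
      ∃ c : ℝ, 0 < c ∧ ∃ x₀ : ℝ, ∀ x : ℝ, x₀ ≤ x →
        c * x ≤
          (({y : ℤ | ∃ w : List (Fin 3),
              y = w.foldr (fun i z => ![(2 : ℤ), 4, 4] i * z + ![(1 : ℤ), 2, 4] i) s} ∩
              {y : ℤ | 0 ≤ y ∧ (y : ℝ) ≤ x}).ncard : ℝ) := by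
  have hs2 : (0:ℝ) < (s:ℝ) + 2 := by positivity
  refine ⟨1 / (6 * ((s:ℝ) + 2)), by positivity, (s:ℝ) + 2, ?_⟩
  intro x hx
  set A : Set ℤ := {y : ℤ | ∃ w : List (Fin 3),
      y = w.foldr (fun i z => ![(2 : ℤ), 4, 4] i * z + ![(1 : ℤ), 2, 4] i) s} ∩
      {y : ℤ | 0 ≤ y ∧ (y : ℝ) ≤ x} with hA
  have hxpos : (0:ℝ) < x := lt_of_lt_of_le hs2 hx
  set n : ℕ := ⌊x / ((s:ℝ) + 2)⌋₊ with hn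
  have hratio : (1:ℝ) ≤ x / ((s:ℝ) + 2) := (one_le_div hs2).mpr hx
  have hn1 : 1 ≤ n := Nat.le_floor (by exact_mod_cast hratio)
  set k : ℕ := Nat.log 2 n with hk
  have h2k : (2:ℝ) ^ k * ((s:ℝ) + 2) ≤ x := by
    have h1 : (2:ℕ) ^ k ≤ n := Nat.pow_log_le_self 2 (by omega)
    have h2 : (n:ℝ) ≤ x / ((s:ℝ) + 2) := Nat.floor_le (by positivity)
    have h3 : (2:ℝ) ^ k ≤ x / ((s:ℝ) + 2) := le_trans (by exact_mod_cast h1) h2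
    calc (2:ℝ) ^ k * ((s:ℝ) + 2) ≤ (x / ((s:ℝ) + 2)) * ((s:ℝ)+2) := by
          exact mul_le_mul_of_nonneg_right h3 (le_of_lt hs2)
      _ = x := div_mul_cancel₀ x (ne_of_gt hs2)
  have hxk : x < 2 * (2:ℝ) ^ k * ((s:ℝ) + 2) := by
    have h1 : n < 2 ^ (k + 1) := Nat.lt_pow_succ_log_self (by norm_num) n
    have h2 : x / ((s:ℝ) + 2) < n + 1 := Nat.lt_floor_add_one _
    have h3 : x / ((s:ℝ) + 2) < 2 ^ (k+1) := by
      calc x / ((s:ℝ) + 2) < n + 1 := h2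
        _ ≤ (2:ℝ) ^ (k+1) := by exact_mod_cast h1
    have := (div_lt_iff₀ hs2).mp h3
    calc x < (2:ℝ)^(k+1) * ((s:ℝ)+2) := this
      _ = 2 * (2:ℝ) ^ k * ((s:ℝ) + 2) := by ring
  -- the image of L k under v s sits inside A
  have hsub : (v s) '' (↑(L k) : Set (List (Fin 3))) ⊆ A := by
    rintro y ⟨w, hw, rfl⟩
    have hWw : W w = k := W_of_mem_L k w (by exact_mod_cast hw)
    constructor
    · exact ⟨w, rfl⟩
    · constructor
      · exact le_trans hs (le_v s hs w)
      · have hb := v_le s hs w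
        rw [hWw] at hb
        have hb' : (v s w : ℝ) + 2 ≤ (2:ℝ) ^ k * ((s:ℝ) + 2) := by
          exact_mod_cast hb
        linarith
  have hAfin : A.Finite := by
    apply Set.Finite.subset (Set.finite_Icc (0:ℤ) ⌈x⌉)
    rintro y ⟨-, hy0, hyx⟩
    exact ⟨hy0, by exact_mod_cast le_trans hyx (Int.le_ceil x)⟩
  have hcard : (L k).card ≤ A.ncard := by
    have h1 : ((v s) '' (↑(L k) : Set (List (Fin 3)))).ncard = (L k).card := by
      rw [Set.ncard_image_of_injective _ (fun a b h => v_inj s hs a b h),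
        Set.ncard_coe_finset]
    rw [← h1]
    exact Set.ncard_le_ncard hsub hAfin
  have hLk : (2:ℝ) ^ k ≤ 3 * (L k).card := by exact_mod_cast card_L k
  have hcard' : ((L k).card : ℝ) ≤ A.ncard := by exact_mod_cast hcard
  rw [div_mul_eq_mul_div, one_mul, div_le_iff₀ (by positivity)]
  nlinarith [hcard', hLk, hxk, le_of_lt hxpos]

end Stmt16

/-- The functions `2x+1`, `4x+2`, `4x+4` form a system of exact covering congruences
(their images partition `ℤ`), and consequently for every integer `s ≥ 0` the orbit set
`⟨{f₁,f₂,f₃} : s⟩` has positive lower density. -/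
theorem stmt_16 :
    (∀ i j : Fin 3, i ≠ j →
      Disjoint {y : ℤ | ∃ m : ℤ, y = ![(2 : ℤ), 4, 4] i * m + ![(1 : ℤ), 2, 4] i}
               {y : ℤ | ∃ m : ℤ, y = ![(2 : ℤ), 4, 4] j * m + ![(1 : ℤ), 2, 4] j}) ∧
    (⋃ i : Fin 3, {y : ℤ | ∃ m : ℤ, y = ![(2 : ℤ), 4, 4] i * m + ![(1 : ℤ), 2, 4] i}) =
      Set.univ ∧
    ∀ s : ℤ, 0 ≤ s →
      ∃ c : ℝ, 0 < c ∧ ∃ x₀ : ℝ, ∀ x : ℝ, x₀ ≤ x →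
        c * x ≤
          (({y : ℤ | ∃ w : List (Fin 3),
              y = w.foldr (fun i z => ![(2 : ℤ), 4, 4] i * z + ![(1 : ℤ), 2, 4] i) s} ∩
              {y : ℤ | 0 ≤ y ∧ (y : ℝ) ≤ x}).ncard : ℝ) := by
  refine ⟨?_, ?_, fun s hs => Stmt16.main s hs⟩
  · intro i j hij
    rw [Set.disjoint_left]
    rintro y ⟨m, rfl⟩ ⟨m', hm'⟩
    fin_cases i <;> fin_cases j <;> simp_all <;> omega
  · ext y
    simp only [Set.mem_iUnion, Set.mem_setOf_eq, Set.mem_univ, iff_true]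
    rcases (show y % 4 = 0 ∨ y % 4 = 1 ∨ y % 4 = 2 ∨ y % 4 = 3 by omega) with h | h | h | h
    · exact ⟨2, (y - 4) / 4, by simp; omega⟩
    · exact ⟨0, (y - 1) / 2, by simp; omega⟩
    · exact ⟨1, (y - 2) / 4, by simp; omega⟩
    · exact ⟨0, (y - 1) / 2, by simp; omega⟩
end
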